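/- arXiv:2106.12786 — 7 statements merged into one kernel-verified Lean document; each statement's English description precedes it below -/
import Mathlib

section
/- For every integer m ≥ 0, the linear map T : P_m(ℝ³;ℝ³) → P_m(ℝ³;ℝ³) defined by T(q)(x) := div( sym( x q(x)ᵀ ) ) is a bijection. In particular, if q ∈ P_m(ℝ³;ℝ³) satisfies div( sym( x q(x)ᵀ ) ) = 0 for all x ∈ ℝ³, then q = 0. -/
/-!
Write `E = ∑ xᵢ ∂ᵢ` for the Euler operator and `D q = div q`. In `n` variables the product rule
gives `2 T(q)ᵢ = (n + 1) qᵢ + E qᵢ + xᵢ D q`, and since `∂ᵢ` commutes with `∂ⱼ`, taking the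
divergence once more gives `D (T q) = (n + 1) D q + E (D q)`. The Euler operator multiplies a
monomial by its degree, so `c p + E p = 0` with `c > 0` forces `p = 0`: from `T q = 0` we get
first `D q = 0` and then `q = 0`. Finally `T` maps the finite-dimensional space `P_m` into itself,
so it is bijective there. On polynomial maps `fderiv` is computed by `pderiv`, so all of this
can be done in `MvPolynomial`.
-/

open Matrix

noncomputable section

abbrev V3 : Type := Fin 3 → ℝ
abbrev M3 : Type := Matrix (Fin 3) (Fin 3) ℝ

/-- The Levi-Civita symbol `ε i j k` on `Fin 3`. -/
def eps (i j k : Fin 3) : ℝ :=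
  ((((j : ℤ) - (i : ℤ)) * ((k : ℤ) - (j : ℤ)) * ((k : ℤ) - (i : ℤ)) : ℤ) : ℝ) / 2

/-- Partial derivative `∂ᵢ f`. -/
def pd (i : Fin 3) (f : V3 → ℝ) : V3 → ℝ :=
  fun x => fderiv ℝ f x (Pi.single i 1)

/-- Cross product of vectors in `ℝ³`. -/
def vcross (a b : V3) : V3 := fun i => ∑ k, ∑ l, eps i k l * a k * b l

/-- Symmetric part of a matrix, `sym B = (B + Bᵀ)/2`. -/
def symMat (B : M3) : M3 := (2:ℝ)⁻¹ • (B + Bᵀ)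

/-- `(∇v)_{ij} = ∂ᵢ v_j`. -/
def gradv (v : V3 → V3) : V3 → M3 :=
  fun x => Matrix.of fun i j => pd i (fun y => v y j) x

/-- Symmetric gradient (deformation) `def v = (∇v + (∇v)ᵀ)/2`. -/
def defv (v : V3 → V3) : V3 → M3 := fun x => symMat (gradv v x)

/-- Column-wise curl `(∇×A)_{ij} = Σ_{s,t} ε_{ist} ∂_s A_{tj}`. -/
def colCurl (A : V3 → M3) : V3 → M3 :=
  fun x => Matrix.of fun i j => ∑ s, ∑ t, eps i s t * pd s (fun y => A y t j) x

/-- Row-wise curl `(A×∇)_{ij} = Σ_{k,l} ε_{jkl} ∂_l A_{ik}`. -/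
def rowCurl (A : V3 → M3) : V3 → M3 :=
  fun x => Matrix.of fun i j => ∑ k, ∑ l, eps j k l * pd l (fun y => A y i k) x

/-- Incompatibility operator `inc A = ∇×(A×∇)`. -/
def incOp (A : V3 → M3) : V3 → M3 := colCurl (rowCurl A)

/-- Row-wise divergence `(div A)_i = Σ_j ∂_j A_{ij}`. -/
def divRow (A : V3 → M3) : V3 → V3 :=
  fun x i => ∑ j, pd j (fun y => A y i j) x

/-- Curl of a vector field. -/
def curlVec (w : V3 → V3) : V3 → V3 :=
  fun x i => ∑ s, ∑ t, eps i s t * pd s (fun y => w y t) x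

/-- `(b×A)_{ij} = Σ_{k,l} ε_{ikl} b_k A_{lj}`. -/
def bCrossA (b : V3) (A : M3) : M3 :=
  Matrix.of fun i j => ∑ k, ∑ l, eps i k l * b k * A l j

/-- `(A×b)_{ij} = Σ_{k,l} ε_{jkl} A_{ik} b_l`. -/
def aCrossB (A : M3) (b : V3) : M3 :=
  Matrix.of fun i j => ∑ k, ∑ l, eps j k l * A i k * b l

/-- `f : ℝ³ → ℝ` is a polynomial map of total degree at most `m` (`m : ℤ`, so
`m < 0` forces `f = 0` since the zero polynomial has empty support). -/
def PolyDeg (m : ℤ) (f : V3 → ℝ) : Prop :=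
  ∃ p : MvPolynomial (Fin 3) ℝ,
    (∀ d ∈ p.support, ((∑ i, d i : ℕ) : ℤ) ≤ m) ∧ f = fun x => MvPolynomial.eval x p

/-- `P_m(ℝ³;ℝ³)`. -/
def PolyVec (m : ℤ) (v : V3 → V3) : Prop := ∀ i, PolyDeg m fun x => v x i

/-- `P_m(ℝ³;𝕄)`. -/
def PolyMat (m : ℤ) (A : V3 → M3) : Prop := ∀ i j, PolyDeg m fun x => A x i j

/-- `P_m(ℝ³;𝕊)`: polynomial symmetric-matrix-valued maps of degree at most `m`. -/
def PolySym (m : ℤ) (A : V3 → M3) : Prop := PolyMat m A ∧ ∀ x, (A x)ᵀ = A x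

/-- `T(q)(x) = div( sym( x q(x)ᵀ ) )`. -/
def T0 (q : V3 → V3) : V3 → V3 :=
  divRow fun y => symMat (Matrix.vecMulVec y (q y))

namespace MvPolynomial

variable {σ R : Type*}

section CommRing

variable [CommRing R]

theorem pderiv_pderiv_comm (i j : σ) (p : MvPolynomial σ R) :
    pderiv i (pderiv j p) = pderiv j (pderiv i p) := by
  have h : ⁅pderiv (R := R) i, pderiv (R := R) j⁆ = 0 := by
    refine derivation_ext fun k => ?_
    classical
    simp [Derivation.commutator_apply, Pi.single_apply, apply_ite]
  rw [← sub_eq_zero, ← Derivation.commutator_apply, h, Derivation.zero_apply]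

theorem X_mul_pderiv_mem_restrictTotalDegree {m : ℕ} (i j : σ) {p : MvPolynomial σ R}
    (hp : p ∈ restrictTotalDegree σ R m) : X i * pderiv j p ∈ restrictTotalDegree σ R m := by
  rw [mem_restrictTotalDegree, totalDegree, Finset.sup_le_iff] at hp ⊢
  simp only [support_X_mul, Finset.mem_map, addLeftEmbedding_apply]
  rintro _ ⟨d, hd, rfl⟩
  have hdj : d + Finsupp.single j 1 ∈ p.support := by
    rw [mem_support_iff, coeff_pderiv] at hd
    exact mem_support_iff.mpr (left_ne_zero_of_mul hd)
  simpa [Finsupp.sum_add_index', add_comm] using hp _ hdj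

variable [Fintype σ]

variable (σ R) in
def euler : MvPolynomial σ R →ₗ[R] MvPolynomial σ R :=
  ∑ i, LinearMap.mulLeft R (X i) ∘ₗ (pderiv i).toLinearMap

theorem euler_apply (p : MvPolynomial σ R) : euler σ R p = ∑ i, X i * pderiv i p := by
  simp [euler]

theorem coeff_euler (p : MvPolynomial σ R) (d : σ →₀ ℕ) :
    coeff d (euler σ R p) = d.degree • coeff d p := by
  induction p using MvPolynomial.induction_on' with
  | add p q hp hq => simp [hp, hq]
  | monomial s a =>
    classical
    simp only [euler_apply, X_mul_pderiv_monomial, ← Finset.sum_smul, coeff_smul,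
      Finsupp.degree_eq_sum, coeff_monomial]
    split_ifs with h <;> simp [h]

theorem eq_zero_of_nsmul_add_euler_eq_zero [IsDomain R] [CharZero R] {c : ℕ} (hc : c ≠ 0)
    {p : MvPolynomial σ R} (h : c • p + euler σ R p = 0) : p = 0 := by
  ext d
  have hd := congr(coeff d $h)
  rw [coeff_add, coeff_smul, coeff_euler, ← add_smul, coeff_zero, smul_eq_zero] at hd
  exact hd.resolve_left (by omega)

theorem euler_mem_restrictTotalDegree {m : ℕ} {p : MvPolynomial σ R}
    (hp : p ∈ restrictTotalDegree σ R m) : euler σ R p ∈ restrictTotalDegree σ R m := by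
  rw [euler_apply]
  exact Submodule.sum_mem _ fun i _ => X_mul_pderiv_mem_restrictTotalDegree i i hp

variable (σ R) in
def divergence : (σ → MvPolynomial σ R) →ₗ[R] MvPolynomial σ R :=
  ∑ i, (pderiv i).toLinearMap ∘ₗ LinearMap.proj i

theorem divergence_apply (q : σ → MvPolynomial σ R) :
    divergence σ R q = ∑ i, pderiv i (q i) := by
  simp [divergence]

theorem divergence_X_mul (r : MvPolynomial σ R) :
    divergence σ R (fun i => X i * r) = Fintype.card σ • r + euler σ R r := by
  simp [divergence_apply, Finset.sum_add_distrib, euler_apply, add_comm]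

theorem divergence_X_mul_left (i : σ) (q : σ → MvPolynomial σ R) :
    divergence σ R (fun j => X i * q j) = q i + X i * divergence σ R q := by
  classical
  simp [divergence_apply, Finset.sum_add_distrib, Pi.single_apply, Finset.mul_sum, add_comm]

theorem divergence_euler (q : σ → MvPolynomial σ R) :
    divergence σ R (fun i => euler σ R (q i)) =
      divergence σ R q + euler σ R (divergence σ R q) := by
  classical
  simp only [divergence_apply, euler_apply, map_sum, pderiv_mul, pderiv_X, Pi.single_apply,
    ite_mul, one_mul, zero_mul, Finset.sum_add_distrib, Finset.sum_ite_eq', Finset.mem_univ,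
    if_true]
  refine congrArg (_ + ·) ?_
  exact Finset.sum_congr rfl fun a _ => Finset.sum_congr rfl fun b _ => by
    rw [pderiv_pderiv_comm]

end CommRing

section Field

variable [Field R] [Fintype σ]

variable (σ R) in
def divSymXMul : (σ → MvPolynomial σ R) →ₗ[R] σ → MvPolynomial σ R where
  toFun q i := ∑ j, pderiv j ((2 : R)⁻¹ • (X i * q j + X j * q i))
  map_add' q q' := by
    ext1 i
    simp only [Pi.add_apply, mul_add, smul_add, map_add, Finset.sum_add_distrib]
    abel
  map_smul' c q := by
    ext1 i
    simp only [Pi.smul_apply, mul_smul_comm, ← smul_add, smul_comm (2 : R)⁻¹ c,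
      Derivation.map_smul, ← Finset.smul_sum, RingHom.id_apply]

theorem divSymXMul_apply (q : σ → MvPolynomial σ R) (i : σ) :
    divSymXMul σ R q i =
      (2 : R)⁻¹ • ((Fintype.card σ + 1) • q i + euler σ R (q i) + X i * divergence σ R q) := by
  have hsum : ∑ j, pderiv j (X i * q j + X j * q i) =
      q i + X i * divergence σ R q + (Fintype.card σ • q i + euler σ R (q i)) := by
    rw [← divergence_X_mul_left, ← divergence_X_mul, ← map_add, divergence_apply]
    rfl
  simp only [divSymXMul, LinearMap.coe_mk, AddHom.coe_mk, Derivation.map_smul,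
    ← Finset.smul_sum, hsum]
  module

theorem divergence_divSymXMul [CharZero R] (q : σ → MvPolynomial σ R) :
    divergence σ R (divSymXMul σ R q) =
      (Fintype.card σ + 1) • divergence σ R q + euler σ R (divergence σ R q) := by
  have hq : divSymXMul σ R q = (2 : R)⁻¹ • ((Fintype.card σ + 1) • q +
      (fun i => euler σ R (q i)) + fun i => X i * divergence σ R q) := by
    ext1 i
    rw [divSymXMul_apply]
    rfl
  rw [hq, map_smul, map_add, map_add, map_nsmul, divergence_euler, divergence_X_mul]
  module

theorem divSymXMul_injective [CharZero R] : Function.Injective (divSymXMul σ R) := by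
  rw [← LinearMap.ker_eq_bot, LinearMap.ker_eq_bot']
  intro q hq
  have hD : divergence σ R q = 0 :=
    eq_zero_of_nsmul_add_euler_eq_zero (c := Fintype.card σ + 1) (by omega) <| by
      rw [← divergence_divSymXMul, hq, map_zero]
  ext1 i
  have hqi := congr_fun hq i
  rw [divSymXMul_apply, hD, mul_zero, add_zero, Pi.zero_apply, smul_eq_zero] at hqi
  exact eq_zero_of_nsmul_add_euler_eq_zero (by omega) (hqi.resolve_left (by norm_num))

theorem divSymXMul_mem_pi_restrictTotalDegree {m : ℕ} {q : σ → MvPolynomial σ R}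
    (hq : q ∈ Submodule.pi Set.univ fun _ => restrictTotalDegree σ R m) :
    divSymXMul σ R q ∈ Submodule.pi Set.univ fun _ => restrictTotalDegree σ R m := by
  intro i _
  have hqj : ∀ j, q j ∈ restrictTotalDegree σ R m := fun j => hq j (Set.mem_univ j)
  rw [divSymXMul_apply, divergence_apply, Finset.mul_sum]
  refine Submodule.smul_mem _ _ (add_mem (add_mem ?_ ?_) (Submodule.sum_mem _ fun j _ => ?_))
  · exact Submodule.smul_of_tower_mem _ _ (hqj i)
  · exact euler_mem_restrictTotalDegree (hqj i)
  · exact X_mul_pderiv_mem_restrictTotalDegree i j (hqj j)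

instance {m : ℕ} :
    Module.Finite R (Submodule.pi Set.univ fun _ : σ => restrictTotalDegree σ R m) :=
  Module.Finite.iff_fg.mpr (Submodule.fg_pi fun _ => Module.Finite.iff_fg.mp inferInstance)

theorem bijOn_divSymXMul [CharZero R] (m : ℕ) :
    Set.BijOn (divSymXMul σ R) (Submodule.pi Set.univ fun _ : σ => restrictTotalDegree σ R m)
      (Submodule.pi Set.univ fun _ : σ => restrictTotalDegree σ R m) :=
  have hmaps := fun _ => divSymXMul_mem_pi_restrictTotalDegree
  ⟨hmaps, divSymXMul_injective.injOn,
    (LinearMap.injOn_iff_surjOn hmaps).mp divSymXMul_injective.injOn⟩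

end Field

theorem hasFDerivAt_eval {𝕜 : Type*} [NontriviallyNormedField 𝕜] [Fintype σ]
    (p : MvPolynomial σ 𝕜) (x : σ → 𝕜) :
    HasFDerivAt (fun y => eval y p)
      (∑ j, eval x (pderiv j p) • (ContinuousLinearMap.proj j : (σ → 𝕜) →L[𝕜] 𝕜)) x := by
  induction p using MvPolynomial.induction_on with
  | C a =>
    simp only [eval_C]
    exact (hasFDerivAt_const a x).congr_fderiv (by ext; simp)
  | add p q hp hq =>
    simp only [eval_add]
    exact (hp.add hq).congr_fderiv (by ext; simp [add_mul, Finset.sum_add_distrib])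
  | mul_X p i hp =>
    classical
    simp only [eval_mul, eval_X]
    refine (hp.mul (hasFDerivAt_apply (𝕜 := 𝕜) (F' := fun _ => 𝕜) i x)).congr_fderiv ?_
    ext v
    simp [Pi.single_apply, apply_ite (eval x), add_mul, Finset.sum_add_distrib, Finset.mul_sum,
      mul_assoc]

theorem fderiv_eval_single {𝕜 : Type*} [NontriviallyNormedField 𝕜] [Fintype σ] [DecidableEq σ]
    (p : MvPolynomial σ 𝕜) (x : σ → 𝕜) (j : σ) :
    fderiv 𝕜 (fun y => eval y p) x (Pi.single j 1) = eval x (pderiv j p) := by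
  simp [(hasFDerivAt_eval p x).fderiv, Pi.single_apply]

def evalPi [CommRing R] (p : σ → MvPolynomial σ R) (x : σ → R) : σ → R := fun i => eval x (p i)

theorem evalPi_injective [CommRing R] [IsDomain R] [Infinite R] :
    Function.Injective (evalPi : (σ → MvPolynomial σ R) → (σ → R) → σ → R) := fun _ _ h =>
  _root_.funext fun i => MvPolynomial.funext fun x => congr_fun (congr_fun h x) i

end MvPolynomial

open MvPolynomial

theorem T0_evalPi (p : Fin 3 → MvPolynomial (Fin 3) ℝ) :
    T0 (evalPi p) = evalPi (divSymXMul (Fin 3) ℝ p) := by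
  ext x i
  have hentry : ∀ j, (fun y => symMat (vecMulVec y (evalPi p y)) i j) =
      fun y => eval y ((2 : ℝ)⁻¹ • (X i * p j + X j * p i)) := fun j => by
    ext y
    simp [symMat, vecMulVec_apply, evalPi, mul_comm, mul_add]
  simp only [T0, divRow, pd, hentry, fderiv_eval_single, evalPi, divSymXMul, LinearMap.coe_mk,
    AddHom.coe_mk, map_sum]

theorem polyDeg_iff (m : ℕ) (f : V3 → ℝ) :
    PolyDeg m f ↔ ∃ p ∈ restrictTotalDegree (Fin 3) ℝ m, (fun x => eval x p) = f := by
  simp only [PolyDeg, mem_restrictTotalDegree, totalDegree, Finset.sup_le_iff,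
    Finsupp.sum_fintype, implies_true, Nat.cast_le, eq_comm (a := f)]

theorem setOf_polyVec (m : ℕ) :
    {q : V3 → V3 | PolyVec m q} =
      evalPi '' (Submodule.pi Set.univ fun _ : Fin 3 => restrictTotalDegree (Fin 3) ℝ m) := by
  ext q
  simp only [Set.mem_ofPred_eq, PolyVec, polyDeg_iff, Classical.skolem, Set.mem_image,
    SetLike.mem_coe, Submodule.mem_pi, Set.mem_univ, true_implies, forall_and]
  refine exists_congr fun p => and_congr_right fun _ => ?_
  simp only [evalPi, _root_.funext_iff]
  exact forall_comm

/-- for every `m ≥ 0`, the map `q ↦ div(sym(x qᵀ))` is a bijection of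
`P_m(ℝ³;ℝ³)` onto itself; in particular its kernel in `P_m(ℝ³;ℝ³)` is trivial. -/
theorem stmt_0 (m : ℕ) :
    Set.BijOn T0 {q : V3 → V3 | PolyVec m q} {q : V3 → V3 | PolyVec m q} ∧
    ∀ q : V3 → V3, PolyVec m q → (∀ x, T0 q x = 0) → q = 0 := by
  have hbij : Set.BijOn T0 {q : V3 → V3 | PolyVec m q} {q : V3 → V3 | PolyVec m q} := by
    rw [setOf_polyVec]
    exact Function.Semiconj.bijOn_image (fun p => (T0_evalPi p).symm) (bijOn_divSymXMul m)
      evalPi_injective.injOn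
  have hzero : evalPi (0 : Fin 3 → MvPolynomial (Fin 3) ℝ) = 0 := by
    ext
    simp [evalPi]
  refine ⟨hbij, fun q hq hTq => hbij.injOn hq ?_ ?_⟩
  · rw [setOf_polyVec, ← hzero]
    exact Set.mem_image_of_mem _ (zero_mem _)
  · rw [← hzero, T0_evalPi, map_zero]
    exact funext hTq
end
end

section
/- The Koszul elasticity sequence is a complex; namely: (i) for every vector field v : ℝ³ → ℝ³ and every x ∈ ℝ³, x×( sym( v(x) xᵀ ) ×x ) = 0; (ii) for every matrix field τ : ℝ³ → ℝ^{3×3} and every x ∈ ℝ³, ( x×(τ(x)×x) )·x = 0; (iii) for every continuously differentiable symmetric matrix field τ : ℝ³ → 𝕊, the vector field w(x) := τ(x)·x satisfies π_RM(w) = 0. -/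
open Matrix

noncomputable section

/-- The rigid-motion projection `π_RM(w) : x ↦ w(0) + (1/2)(∇×w)(0) × x`. -/
def piRM (w : V3 → V3) : V3 → V3 :=
  fun y => w 0 + (2:ℝ)⁻¹ • vcross (curlVec w 0) y

/-
Write `x×` and `×x` through Mathlib's cross product: `b×A` crosses `b` into every column of `A`,
`A×b` crosses every row of `A` with `b`. Then (i) holds because `sym(v xᵀ)×x = ½ x (v×x)ᵀ` has
columns parallel to `x`, and (ii) because every row of `τ×x` is orthogonal to `x`. For (iii),
`w(0) = 0` and `∂ₛwₜ(0) = τₜₛ(0)`, so `(∇×w)(0)` is the contraction of `ε` with a symmetric matrix.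
-/

lemma eps_swap (i s t : Fin 3) : eps i t s = -eps i s t := by
  unfold eps
  push_cast
  ring

lemma vcross_eq_cross (a b : V3) : vcross a b = a ⨯₃ b := by
  ext i
  fin_cases i <;> simp [vcross, eps, cross_apply, Fin.sum_univ_succ] <;> ring

lemma bCrossA_apply (b : V3) (A : M3) (i j : Fin 3) : bCrossA b A i j = (b ⨯₃ Aᵀ j) i := by
  rw [← vcross_eq_cross]
  rfl

lemma aCrossB_apply (A : M3) (b : V3) (i j : Fin 3) : aCrossB A b i j = (A i ⨯₃ b) j := by
  rw [← vcross_eq_cross]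
  rfl

lemma aCrossB_add (A B : M3) (b : V3) : aCrossB (A + B) b = aCrossB A b + aCrossB B b := by
  ext i j
  simp only [aCrossB_apply, Matrix.add_apply]
  exact congrFun (LinearMap.map_add₂ crossProduct (A i) (B i) b) j

lemma aCrossB_smul (r : ℝ) (A : M3) (b : V3) : aCrossB (r • A) b = r • aCrossB A b := by
  ext i j
  simp only [aCrossB_apply, Matrix.smul_apply]
  exact congrFun (LinearMap.map_smul₂ crossProduct r (A i) b) j

lemma aCrossB_vecMulVec (a b c : V3) : aCrossB (vecMulVec a b) c = vecMulVec a (b ⨯₃ c) := by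
  ext i j
  have hrow : vecMulVec a b i = a i • b := rfl
  rw [aCrossB_apply, hrow, LinearMap.map_smul₂, vecMulVec_apply]
  rfl

lemma bCrossA_vecMulVec (c a b : V3) : bCrossA c (vecMulVec a b) = vecMulVec (c ⨯₃ a) b := by
  ext i j
  have hcol : (vecMulVec a b)ᵀ j = b j • a := funext fun _ => mul_comm _ _
  rw [bCrossA_apply, hcol, map_smul, vecMulVec_apply, Pi.smul_apply, smul_eq_mul, mul_comm]

lemma bCrossA_mulVec (b : V3) (A : M3) (y : V3) : bCrossA b A *ᵥ y = b ⨯₃ (A *ᵥ y) := by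
  ext i
  fin_cases i <;>
    simp [bCrossA_apply, mulVec, dotProduct, cross_apply, Fin.sum_univ_succ] <;> ring

lemma aCrossB_mulVec_self (A : M3) (x : V3) : aCrossB A x *ᵥ x = 0 := by
  ext i
  simp only [mulVec, dotProduct, aCrossB_apply, Pi.zero_apply]
  rw [← dotProduct, dotProduct_comm]
  exact dot_cross_self _ _

lemma aCrossB_symMat_vecMulVec_self (v x : V3) :
    aCrossB (symMat (vecMulVec v x)) x = vecMulVec x ((2:ℝ)⁻¹ • v ⨯₃ x) := by
  rw [symMat, aCrossB_smul, aCrossB_add, transpose_vecMulVec, aCrossB_vecMulVec,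
    aCrossB_vecMulVec, cross_self, vecMulVec_zero, zero_add, vecMulVec_smul]

lemma sum_eps_mul_of_transpose_eq (M : M3) (hM : Mᵀ = M) (i : Fin 3) :
    ∑ s, ∑ t, eps i s t * M t s = 0 := by
  have hswap : ∑ s, ∑ t, eps i s t * M t s = -∑ s, ∑ t, eps i s t * M t s := calc
    ∑ s, ∑ t, eps i s t * M t s = ∑ t, ∑ s, eps i s t * M t s := Finset.sum_comm
    _ = ∑ t, ∑ s, -(eps i t s * M s t) := by
      refine Finset.sum_congr rfl fun t _ => Finset.sum_congr rfl fun s _ => ?_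
      rw [eps_swap, ← transpose_apply M s t, hM]
      ring
    _ = -∑ s, ∑ t, eps i s t * M t s := by simp
  linarith

lemma pd_mulVec_self_zero (τ : V3 → M3) (hτ : ∀ i j, DifferentiableAt ℝ (fun x => τ x i j) 0)
    (s t : Fin 3) : pd s (fun y => (τ y *ᵥ y) t) 0 = τ 0 t s := by
  have hcoord : ∀ j : Fin 3, HasFDerivAt (fun y : V3 => y j) (ContinuousLinearMap.proj j) 0 :=
    fun j => (ContinuousLinearMap.proj j : V3 →L[ℝ] ℝ).hasFDerivAt
  have hderiv := HasFDerivAt.fun_sum (u := Finset.univ) (A := fun j y => τ y t j * y j)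
    fun j _ => (hτ t j).hasFDerivAt.mul (hcoord j)
  have hw : (fun y : V3 => (τ y *ᵥ y) t) = fun y => ∑ j, τ y t j * y j := rfl
  rw [pd, hw, hderiv.fderiv]
  simp [Pi.single_apply]

lemma curlVec_mulVec_self_zero (τ : V3 → M3)
    (hτ : ∀ i j, DifferentiableAt ℝ (fun x => τ x i j) 0) (hsym : (τ 0)ᵀ = τ 0) :
    curlVec (fun x => τ x *ᵥ x) 0 = 0 := by
  ext i
  simp only [curlVec, pd_mulVec_self_zero τ hτ, Pi.zero_apply]
  exact sum_eps_mul_of_transpose_eq _ hsym i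

/-- the Koszul elasticity sequence is a complex:
(i) `x×(sym(v(x)xᵀ)×x) = 0`; (ii) `(x×(τ(x)×x))·x = 0`;
(iii) for `C¹` symmetric `τ`, `π_RM(τ·x) = 0`. -/
theorem stmt_5 :
    (∀ v : V3 → V3, ∀ x : V3, bCrossA x (aCrossB (symMat (Matrix.vecMulVec (v x) x)) x) = 0) ∧
    (∀ τ : V3 → M3, ∀ x : V3, (bCrossA x (aCrossB (τ x) x)).mulVec x = 0) ∧
    (∀ τ : V3 → M3, (∀ i j, ContDiff ℝ 1 fun x => τ x i j) → (∀ x, (τ x)ᵀ = τ x) →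
      ∀ y, piRM (fun x => (τ x).mulVec x) y = 0) := by
  refine ⟨fun v x => ?_, fun τ x => ?_, fun τ hC hsym y => ?_⟩
  · rw [aCrossB_symMat_vecMulVec_self, bCrossA_vecMulVec, cross_self, zero_vecMulVec]
  · rw [bCrossA_mulVec, aCrossB_mulVec_self, map_zero]
  · have hτ : ∀ i j, DifferentiableAt ℝ (fun x => τ x i j) 0 :=
      fun i j => (hC i j).differentiable one_ne_zero _
    rw [piRM, curlVec_mulVec_self_zero τ hτ (hsym 0), mulVec_zero, vcross_eq_cross]
    simp
end
end

section
/- Let m ≥ 0 be an integer. If τ ∈ P_m(ℝ³;𝕊) satisfies x×(τ(x)×x) = 0 for all x ∈ ℝ³, then there exists v ∈ P_{m-1}(ℝ³;ℝ³) such that τ(x) = sym( v(x) xᵀ ) for all x ∈ ℝ³. -/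
open Matrix

noncomputable section

/-! For symmetric `τ`, contracting `ε_{ikl} ε_{jmn}` gives
`x × τ × x = (xᵀτx - |x|² tr τ) I + |x|² τ - (τx)xᵀ - x(τx)ᵀ + tr τ · xxᵀ`, whose trace is
`xᵀτx - |x|² tr τ`. So `x × τ × x = 0` says `|x|² τ = sym(w xᵀ)` with `w = 2τx - tr(τ) x`.
Read as an identity of polynomials, its diagonal gives `|x|² ∣ w_i x_i`. The quadric `|x|²` is
prime in `ℝ[x₁, x₂, x₃]` (the monic quadratic `X² + x₂² + x₃²` has no root over `ℝ[x₂, x₃]`) and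
does not divide `x_i`, so `w = |x|² v`, `τ = sym(v xᵀ)` and `deg v = deg w - 2 ≤ m - 1`. -/

open MvPolynomial

def Matrix.twoMulVecSubTrace {n R : Type*} [Fintype n] [CommRing R] (A : Matrix n n R)
    (y : n → R) : n → R :=
  2 • (A *ᵥ y) - A.trace • y

theorem RingHom.map_twoMulVecSubTrace {n R S : Type*} [Fintype n] [CommRing R] [CommRing S]
    (f : R →+* S) (A : Matrix n n R) (y : n → R) (i : n) :
    f (A.twoMulVecSubTrace y i) = (A.map f).twoMulVecSubTrace (f ∘ y) i := by
  simp [twoMulVecSubTrace, f.map_mulVec, AddMonoidHom.map_trace, map_ofNat]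

theorem bCrossA_aCrossB_of_isSymm {A : M3} (hA : A.IsSymm) (x : V3) :
    bCrossA x (aCrossB A x) =
      (x ⬝ᵥ A *ᵥ x - (x ⬝ᵥ x) * A.trace) • (1 : M3) + (x ⬝ᵥ x) • A
        - vecMulVec (A *ᵥ x) x - vecMulVec x (A *ᵥ x) + A.trace • vecMulVec x x := by
  have h10 : A 1 0 = A 0 1 := hA.apply 0 1
  have h20 : A 2 0 = A 0 2 := hA.apply 0 2
  have h21 : A 2 1 = A 1 2 := hA.apply 1 2
  ext i j
  fin_cases i <;> fin_cases j <;>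
    simp [bCrossA, aCrossB, eps, Fin.sum_univ_three, mulVec, dotProduct, vecMulVec, trace,
      h10, h20, h21] <;> ring

theorem trace_bCrossA_aCrossB_of_isSymm {A : M3} (hA : A.IsSymm) (x : V3) :
    (bCrossA x (aCrossB A x)).trace = x ⬝ᵥ A *ᵥ x - (x ⬝ᵥ x) * A.trace := by
  rw [bCrossA_aCrossB_of_isSymm hA]
  simp only [trace_add, trace_sub, trace_smul, trace_one, trace_vecMulVec, smul_eq_mul,
    Fintype.card_fin, dotProduct_comm (A *ᵥ x) x]
  push_cast
  ring

theorem dotProduct_self_smul_eq_symMat_of_bCrossA_aCrossB_eq_zero {A : M3} (hA : A.IsSymm)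
    {x : V3} (h : bCrossA x (aCrossB A x) = 0) :
    (x ⬝ᵥ x) • A = symMat (vecMulVec (A.twoMulVecSubTrace x) x) := by
  have hs : x ⬝ᵥ A *ᵥ x - (x ⬝ᵥ x) * A.trace = 0 := by
    rw [← trace_bCrossA_aCrossB_of_isSymm hA, h, trace_zero]
  rw [bCrossA_aCrossB_of_isSymm hA, hs, zero_smul, zero_add] at h
  ext i j
  have hij := congrFun (congrFun h i) j
  simp only [Matrix.add_apply, Matrix.sub_apply, Matrix.smul_apply, Matrix.zero_apply,
    vecMulVec_apply, smul_eq_mul] at hij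
  simp only [symMat, twoMulVecSubTrace, Matrix.smul_apply, Matrix.add_apply,
    Matrix.transpose_apply, vecMulVec_apply, Pi.sub_apply, Pi.add_apply, Pi.smul_apply,
    smul_eq_mul, two_smul]
  linear_combination hij

theorem Polynomial.prime_X_sq_add_C {R : Type*} [CommRing R] [IsDomain R]
    [UniqueFactorizationMonoid R] {c : R} (hc : ∀ r : R, r ^ 2 + c ≠ 0) :
    Prime (X ^ 2 + C c) := by
  have hmonic : (X ^ 2 + C c).Monic := monic_X_pow_add_C c two_ne_zero
  refine Irreducible.prime ?_
  rw [hmonic.irreducible_iff_roots_eq_zero_of_degree_le_three (by simp) (by simp)]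
  refine Multiset.eq_zero_of_forall_notMem fun r hr => hc r ?_
  simpa using (mem_roots hmonic.ne_zero).mp hr

section SumOfSquares

variable {K : Type*} [Field K] [LinearOrder K] [IsStrictOrderedRing K]

theorem MvPolynomial.prime_sum_X_sq (n : ℕ) :
    Prime (∑ i : Fin (n + 2), X i ^ 2 : MvPolynomial (Fin (n + 2)) K) := by
  rw [← MulEquiv.prime_iff (finSuccEquiv K (n + 1)).toMulEquiv]
  have h : finSuccEquiv K (n + 1) (∑ i : Fin (n + 2), X i ^ 2)
      = Polynomial.X ^ 2 + Polynomial.C (∑ i : Fin (n + 1), X i ^ 2) := by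
    simp only [Fin.sum_univ_succ (n := n + 1), map_add, map_sum, map_pow, finSuccEquiv_X_zero,
      finSuccEquiv_X_succ]
  refine h ▸ Polynomial.prime_X_sq_add_C fun r hr => ?_
  have := congrArg (eval fun _ => (1 : K)) hr
  simp only [map_add, map_pow, map_sum, eval_X, one_pow, map_zero, Finset.sum_const,
    Finset.card_univ, Fintype.card_fin, nsmul_eq_mul, mul_one] at this
  exact absurd this (by positivity)

theorem MvPolynomial.totalDegree_sum_X_sq (n : ℕ) :
    (∑ i : Fin (n + 2), X i ^ 2 : MvPolynomial (Fin (n + 2)) K).totalDegree = 2 :=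
  (IsHomogeneous.sum _ _ 2 fun i _ => isHomogeneous_X_pow i 2).totalDegree
    (prime_sum_X_sq n).ne_zero

theorem MvPolynomial.sum_X_sq_dvd_of_dvd_mul_X {n : ℕ} {f : MvPolynomial (Fin (n + 2)) K}
    {i : Fin (n + 2)} (h : ∑ j, X j ^ 2 ∣ f * X i) : ∑ j, X j ^ 2 ∣ f := by
  refine ((prime_sum_X_sq n).dvd_or_dvd h).resolve_right fun hX => ?_
  have := totalDegree_le_of_dvd_of_isDomain hX (X_ne_zero i)
  rw [totalDegree_sum_X_sq, totalDegree_X] at this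
  omega

theorem MvPolynomial.exists_two_mul_eq_of_sum_X_sq_mul_eq {n : ℕ}
    {P : Matrix (Fin (n + 2)) (Fin (n + 2)) (MvPolynomial (Fin (n + 2)) K)}
    {w : Fin (n + 2) → MvPolynomial (Fin (n + 2)) K}
    (h : ∀ i j, (∑ k, X k ^ 2) * (2 * P i j) = w i * X j + w j * X i) :
    ∃ v : Fin (n + 2) → MvPolynomial (Fin (n + 2)) K,
      (∀ i, w i = (∑ k, X k ^ 2) * v i) ∧ ∀ i j, 2 * P i j = v i * X j + v j * X i := by
  choose v hv using fun i => sum_X_sq_dvd_of_dvd_mul_X (i := i) (f := w i)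
    ⟨P i i, mul_left_cancel₀ two_ne_zero (by linear_combination -(h i i))⟩
  refine ⟨v, hv, fun i j => mul_left_cancel₀ (prime_sum_X_sq n).ne_zero ?_⟩
  linear_combination h i j + X j * hv i + X i * hv j

end SumOfSquares

section TotalDegree

variable {σ R : Type*} [CommRing R] [Fintype σ]

theorem MvPolynomial.totalDegree_le_of_forall_mem_support {p : MvPolynomial σ R} {n : ℕ}
    (h : ∀ d ∈ p.support, ∑ i, d i ≤ n) : p.totalDegree ≤ n :=
  Finset.sup_le fun d hd => by simpa [Finsupp.sum_fintype] using h d hd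

theorem MvPolynomial.sum_add_totalDegree_le_totalDegree_mul [IsDomain R]
    {f g : MvPolynomial σ R} (hf : f ≠ 0) {d : σ →₀ ℕ} (hd : d ∈ g.support) :
    ∑ i, d i + f.totalDegree ≤ (f * g).totalDegree := by
  rw [totalDegree_mul_of_isDomain hf (by rintro rfl; simp at hd), add_comm]
  grw [← le_totalDegree hd]
  simp [Finsupp.sum_fintype]

theorem MvPolynomial.totalDegree_twoMulVecSubTrace_X_le [Nontrivial R]
    {P : Matrix σ σ (MvPolynomial σ R)} {n : ℕ} (hP : ∀ i j, (P i j).totalDegree ≤ n) (i : σ) :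
    (P.twoMulVecSubTrace X i).totalDegree ≤ n + 1 := by
  have hPX : ((P *ᵥ X) i).totalDegree ≤ n + 1 := by
    refine (totalDegree_finsetSum _ _).trans (Finset.sup_le fun j _ => ?_)
    grw [totalDegree_mul, hP, totalDegree_X]
  have htrX : (P.trace * X i).totalDegree ≤ n + 1 := by
    grw [totalDegree_mul, totalDegree_X, trace, totalDegree_finsetSum]
    gcongr
    exact Finset.sup_le fun j _ => hP j j
  simp only [twoMulVecSubTrace, Pi.sub_apply, Pi.add_apply, Pi.smul_apply, two_smul, smul_eq_mul]
  grw [totalDegree_sub, totalDegree_add, max_self]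
  exact max_le hPX htrX

end TotalDegree

theorem PolyDeg.exists_totalDegree_le {m : ℕ} {f : V3 → ℝ} (hf : PolyDeg m f) :
    ∃ p : MvPolynomial (Fin 3) ℝ, p.totalDegree ≤ m ∧ f = fun x => eval x p := by
  obtain ⟨p, hp, rfl⟩ := hf
  exact ⟨p, totalDegree_le_of_forall_mem_support fun d hd => by exact_mod_cast hp d hd, rfl⟩

theorem polyDeg_sub_one_of_sum_X_sq_mul_eq {m : ℕ} {v w : MvPolynomial (Fin 3) ℝ}
    (hw : w = (∑ i, X i ^ 2) * v) (hdeg : w.totalDegree ≤ m + 1) :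
    PolyDeg ((m : ℤ) - 1) fun x => eval x v := by
  refine ⟨v, fun d hd => ?_, rfl⟩
  have : ∑ i, d i + 2 ≤ m + 1 :=
    calc ∑ i, d i + 2 = ∑ i, d i + (∑ i : Fin 3, X i ^ 2 : MvPolynomial _ ℝ).totalDegree := by
          rw [totalDegree_sum_X_sq 1]
    _ ≤ w.totalDegree :=
          hw ▸ sum_add_totalDegree_le_totalDegree_mul (prime_sum_X_sq 1).ne_zero hd
    _ ≤ m + 1 := hdeg
  omega

theorem sum_X_sq_mul_eq_of_bCrossA_aCrossB_eq_zero
    {P : Matrix (Fin 3) (Fin 3) (MvPolynomial (Fin 3) ℝ)} (hP : ∀ x, (P.map (eval x)).IsSymm)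
    (h : ∀ x : V3, bCrossA x (aCrossB (P.map (eval x)) x) = 0) (i j : Fin 3) :
    (∑ k, X k ^ 2) * (2 * P i j) =
      P.twoMulVecSubTrace X i * X j + P.twoMulVecSubTrace X j * X i := by
  refine MvPolynomial.funext fun x => ?_
  have := congrFun (congrFun
    (dotProduct_self_smul_eq_symMat_of_bCrossA_aCrossB_eq_zero (hP x) (h x)) i) j
  simp only [symMat, Matrix.smul_apply, Matrix.add_apply, Matrix.transpose_apply,
    vecMulVec_apply, smul_eq_mul, map_apply, dotProduct, ← sq] at this
  simp only [map_add, map_mul, map_sum, map_pow, map_ofNat, eval_X,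
    (eval x).map_twoMulVecSubTrace, Function.comp_def]
  linear_combination 2 * this

/-- if `τ ∈ P_m(ℝ³;𝕊)` and `x×(τ(x)×x) = 0` for all `x`, then
`τ(x) = sym(v(x) xᵀ)` for some `v ∈ P_{m-1}(ℝ³;ℝ³)`. -/
theorem stmt_6 (m : ℕ) (τ : V3 → M3) (hτ : PolySym m τ)
    (h : ∀ x : V3, bCrossA x (aCrossB (τ x) x) = 0) :
    ∃ v : V3 → V3, PolyVec ((m : ℤ) - 1) v ∧
      ∀ x : V3, τ x = symMat (Matrix.vecMulVec (v x) x) := by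
  obtain ⟨hpoly, hsymm⟩ := hτ
  choose P hPdeg hPeval using fun i j => (hpoly i j).exists_totalDegree_le
  have hτP (x : V3) : τ x = (of P).map (eval x) := by
    ext i j
    exact congrFun (hPeval i j) x
  obtain ⟨v, hv, hPv⟩ := exists_two_mul_eq_of_sum_X_sq_mul_eq <|
    sum_X_sq_mul_eq_of_bCrossA_aCrossB_eq_zero (fun x => hτP x ▸ hsymm x) (fun x => hτP x ▸ h x)
  refine ⟨fun x k => eval x (v k), fun k => polyDeg_sub_one_of_sum_X_sq_mul_eq (hv k)
    (totalDegree_twoMulVecSubTrace_X_le (P := of P) hPdeg k), fun x => ?_⟩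
  ext i j
  have := congrArg (eval x) (hPv i j)
  simp only [map_add, map_mul, eval_X, map_ofNat, of_apply] at this
  simp only [hτP, symMat, Matrix.smul_apply, Matrix.add_apply, Matrix.transpose_apply,
    vecMulVec_apply, smul_eq_mul, map_apply, of_apply]
  linear_combination this / 2
end
end

section
/- Let k ≥ 0 be an integer. If τ ∈ P_k(ℝ³;𝕊) satisfies τ(x)·x = 0 for all x ∈ ℝ³, then there exists σ ∈ P_{k-2}(ℝ³;𝕊) such that τ(x) = x×(σ(x)×x) for all x ∈ ℝ³. -/
open Matrix

noncomputable section

/-! Write `[x]` for the matrix of `v ↦ x × v`, so that `x × (σ × x) = [x] σ [x]`, and regard `τ`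
as a matrix over `ℝ[x₀, x₁, x₂]`. The Koszul complex of `x₀, x₁, x₂` is exact: `u · x = 0` forces
`u = w × x`, and `u × x = 0` forces `u = f x`. Applied to the rows, `τ = U [x]`; symmetry gives
`(xᵀ U) × x = 0`, so `xᵀ U = f xᵀ`, and then the columns of `Uᵀ - f` give `U = f - [x] Bᵀ`. Hence
`τ = f [x] - [x] Bᵀ [x]`, and averaging with `τᵀ` gives `τ = [x] σ [x]` with `σ = -(B + Bᵀ)/2`.
Since the entries of `[x]` are homogeneous of degree one, truncating `σ` to degree `k - 2`
truncates `[x] σ [x]` to degree `k`, which leaves `τ` unchanged. -/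

section CrossMatrix

variable {S : Type*} [CommRing S]

def crossMatrix (x : Fin 3 → S) : Matrix (Fin 3) (Fin 3) S :=
  !![0, -x 2, x 1; x 2, 0, -x 0; -x 1, x 0, 0]

theorem vecMul_crossMatrix (x w : Fin 3 → S) : w ᵥ* crossMatrix x = w ⨯₃ x := by
  ext i
  fin_cases i <;> simp [crossMatrix, cross_apply, vecMul, dotProduct, Fin.sum_univ_three] <;> ring

theorem transpose_crossMatrix (x : Fin 3 → S) : (crossMatrix x)ᵀ = -crossMatrix x := by
  ext i j
  fin_cases i <;> fin_cases j <;> simp [crossMatrix]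

theorem crossMatrix_map {T : Type*} [CommRing T] (f : S →+* T) (x : Fin 3 → S) :
    (crossMatrix x).map f = crossMatrix (f ∘ x) := by
  ext i j
  fin_cases i <;> fin_cases j <;> simp [crossMatrix]

variable {x : Fin 3 → S}

theorem exists_eq_mul_crossMatrix_of_mulVec_eq_zero
    (hdot : ∀ u : Fin 3 → S, u ⬝ᵥ x = 0 → ∃ w, u = w ⨯₃ x) {M : Matrix (Fin 3) (Fin 3) S}
    (hM : M *ᵥ x = 0) : ∃ U, M = U * crossMatrix x := by
  choose U hU using fun i => hdot (M i) (congrFun hM i)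
  refine ⟨Matrix.of U, ext fun i j => ?_⟩
  rw [hU i, ← vecMul_crossMatrix]
  rfl

theorem exists_isSymm_eq_crossMatrix_mul_mul_crossMatrix [Invertible (2 : S)]
    (hdot : ∀ u : Fin 3 → S, u ⬝ᵥ x = 0 → ∃ w, u = w ⨯₃ x)
    (hcross : ∀ u : Fin 3 → S, u ⨯₃ x = 0 → ∃ f : S, u = f • x)
    {P : Matrix (Fin 3) (Fin 3) S} (hP : P.IsSymm) (hPx : P *ᵥ x = 0) :
    ∃ σ : Matrix (Fin 3) (Fin 3) S, σ.IsSymm ∧ P = crossMatrix x * σ * crossMatrix x := by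
  obtain ⟨U, rfl⟩ := exists_eq_mul_crossMatrix_of_mulVec_eq_zero hdot hPx
  set K := crossMatrix x
  have hKt : Kᵀ = -K := transpose_crossMatrix x
  obtain ⟨f, hf⟩ : ∃ f : S, x ᵥ* U = f • x := by
    refine hcross _ ?_
    rw [← vecMul_crossMatrix, vecMul_vecMul, ← mulVec_transpose, hP.eq, hPx]
  obtain ⟨B, hB⟩ : ∃ B, Uᵀ - f • 1 = B * K := by
    refine exists_eq_mul_crossMatrix_of_mulVec_eq_zero hdot ?_
    rw [sub_mulVec, mulVec_transpose, hf, smul_mulVec, one_mulVec, sub_self]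
  have hUt : Uᵀ = B * K + f • 1 := sub_eq_iff_eq_add.1 hB
  have hsum : U * K + (U * K)ᵀ = K * -(B + Bᵀ) * K := by
    rw [transpose_mul, hKt, ← transpose_transpose U, hUt]
    simp only [transpose_add, transpose_mul, transpose_neg, hKt, transpose_smul, transpose_one,
      transpose_transpose]
    simp only [Matrix.mul_add, Matrix.add_mul, Matrix.mul_neg, Matrix.neg_mul, Matrix.mul_smul,
      Matrix.smul_mul, Matrix.mul_one, Matrix.one_mul, Matrix.mul_assoc, smul_neg]
    abel
  refine ⟨(⅟2 : S) • -(B + Bᵀ), ((isSymm_add_transpose_self B).neg).smul _, ?_⟩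
  calc U * K = (⅟2 : S) • (U * K + (U * K)ᵀ) := by
        rw [hP.eq, ← two_smul S, smul_smul, invOf_mul_self, one_smul]
    _ = K * ((⅟2 : S) • -(B + Bᵀ)) * K := by
        rw [hsum, Matrix.mul_smul, Matrix.smul_mul]

end CrossMatrix

namespace MvPolynomial

section Koszul

variable {σ R : Type*} [CommRing R]

theorem X_dvd_sub_aeval_update_zero [DecidableEq σ] (i : σ) (p : MvPolynomial σ R) :
    X i ∣ p - aeval (Function.update X i 0) p := by
  have hmk : (Ideal.Quotient.mkₐ R (Ideal.span {X i})).comp (aeval (Function.update X i 0)) =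
      Ideal.Quotient.mkₐ R (Ideal.span {X i}) := by
    refine algHom_ext fun j => ?_
    rcases eq_or_ne j i with rfl | hj
    · simp
    · simp [Function.update_of_ne hj]
  rw [← Ideal.mem_span_singleton, ← Ideal.Quotient.eq]
  exact (congrArg (· p) hmk).symm

variable [IsDomain R]

theorem X_dvd_of_mul_X_eq_mul_X {i j : σ} (hij : i ≠ j) {p q : MvPolynomial σ R}
    (h : p * X i = q * X j) : X j ∣ p := by
  have hdvd : X j ∣ p * X i := h ▸ dvd_mul_left _ _
  refine (X_prime.dvd_or_dvd hdvd).resolve_right ?_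
  rw [X_dvd_X]
  exact hij.symm

theorem exists_eq_cross_X_of_dotProduct_X_eq_zero {u : Fin 3 → MvPolynomial (Fin 3) R}
    (hu : u ⬝ᵥ X = 0) : ∃ w, u = w ⨯₃ X := by
  rw [dotProduct, Fin.sum_univ_three] at hu
  -- Solve first modulo `X 2`, i.e. in two variables, where `φ u₀ X₀ = -φ u₁ X₁` forces
  -- `φ u₀ = X₁ g`, `φ u₁ = -X₀ g`; the multiples of `X 2` then determine `u 2`.
  obtain ⟨a, ha⟩ := X_dvd_sub_aeval_update_zero 2 (u 0)
  obtain ⟨b, hb⟩ := X_dvd_sub_aeval_update_zero 2 (u 1)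
  set φ := aeval (R := R) (Function.update (X : Fin 3 → MvPolynomial (Fin 3) R) 2 0)
  have hφ : φ (u 0) * X 0 + φ (u 1) * X 1 = 0 := by
    simpa [φ, Function.update_of_ne] using congrArg φ hu
  obtain ⟨g, hg⟩ := X_dvd_of_mul_X_eq_mul_X (by decide : (0 : Fin 3) ≠ 1)
    (eq_neg_of_add_eq_zero_left hφ |>.trans (neg_mul _ _).symm)
  have hφ1 : φ (u 1) = -(X 0 * g) :=
    mul_right_cancel₀ (X_ne_zero 1) (by linear_combination hφ - X 0 * hg)
  have hu2 : u 2 = -(a * X 0 + b * X 1) := mul_right_cancel₀ (X_ne_zero 2) <| by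
    linear_combination hu - X 0 * (ha + hg) - X 1 * (hb + hφ1)
  refine ⟨![-b, a, -g], ?_⟩
  funext k
  fin_cases k <;> simp [cross_apply, hu2]
  · linear_combination ha + hg
  · linear_combination hb + hφ1
  · ring

theorem exists_eq_smul_X_of_cross_X_eq_zero {u : Fin 3 → MvPolynomial (Fin 3) R}
    (hu : u ⨯₃ X = 0) : ∃ f : MvPolynomial (Fin 3) R, u = f • X := by
  have h1 := congrFun hu 1
  have h2 := congrFun hu 2
  simp only [cross_apply, Matrix.cons_val, Pi.zero_apply] at h1 h2
  obtain ⟨f, hf⟩ := X_dvd_of_mul_X_eq_mul_X (by decide : (1 : Fin 3) ≠ 0) (sub_eq_zero.1 h2)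
  refine ⟨f, ?_⟩
  funext k
  fin_cases k <;> simp only [Fin.reduceFinMk, Fin.isValue, Pi.smul_apply, smul_eq_mul]
  · rw [hf, mul_comm]
  · exact mul_right_cancel₀ (X_ne_zero 0) (by linear_combination -h2 + X 1 * hf)
  · exact mul_right_cancel₀ (X_ne_zero 0) (by linear_combination h1 + X 2 * hf)

end Koszul

section TruncTotalDegree

variable {σ R : Type*} [CommSemiring R]

/-- The bound `m` is an integer, as in `PolyDeg`: for `m < 0` the truncation is `0`. -/
def truncTotalDegree (m : ℤ) : MvPolynomial σ R →ₗ[R] MvPolynomial σ R :=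
  (AddMonoidAlgebra.coeffLinearEquiv _).symm.toLinearMap ∘ₗ Submodule.subtype _ ∘ₗ
    Finsupp.restrictDom _ _ {d : σ →₀ ℕ | (d.degree : ℤ) ≤ m} ∘ₗ
    (AddMonoidAlgebra.coeffLinearEquiv _).toLinearMap

theorem coeff_truncTotalDegree (m : ℤ) (p : MvPolynomial σ R) (d : σ →₀ ℕ) :
    coeff d (truncTotalDegree m p) = if (d.degree : ℤ) ≤ m then coeff d p else 0 := by
  simp [truncTotalDegree, MvPolynomial, coeff, Finsupp.filter_apply]

theorem truncTotalDegree_eq_self {m : ℤ} {p : MvPolynomial σ R}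
    (h : ∀ d ∈ p.support, (d.degree : ℤ) ≤ m) : truncTotalDegree m p = p := by
  ext d
  rw [coeff_truncTotalDegree, ite_eq_left_iff]
  exact fun hd => (notMem_support_iff.1 (mt (h d) hd)).symm

theorem degree_le_of_mem_support_truncTotalDegree {m : ℤ} {p : MvPolynomial σ R}
    {d : σ →₀ ℕ} (hd : d ∈ (truncTotalDegree m p).support) : (d.degree : ℤ) ≤ m := by
  rw [mem_support_iff, coeff_truncTotalDegree] at hd
  by_contra h
  exact hd (if_neg h)

theorem IsHomogeneous.truncTotalDegree_mul {q : MvPolynomial σ R} {n : ℕ}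
    (hq : q.IsHomogeneous n) (m : ℤ) (p : MvPolynomial σ R) :
    truncTotalDegree (m + n) (q * p) = q * truncTotalDegree m p := by
  classical
  ext d
  rw [coeff_truncTotalDegree, coeff_mul, coeff_mul]
  have key : ∀ a b : σ →₀ ℕ, a + b = d → coeff a q ≠ 0 →
      ((d.degree : ℤ) ≤ m + n ↔ (b.degree : ℤ) ≤ m) := by
    rintro a b rfl hqa
    rw [map_add, not_not.1 (mt hq.coeff_eq_zero hqa)]
    push_cast
    omega
  split_ifs with h
  · refine Finset.sum_congr rfl fun ab hab => ?_
    by_cases hqa : coeff ab.1 q = 0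
    · simp [hqa]
    · rw [coeff_truncTotalDegree,
        if_pos ((key _ _ (Finset.HasAntidiagonal.mem_antidiagonal.1 hab) hqa).1 h)]
  · refine (Finset.sum_eq_zero fun ab hab => ?_).symm
    by_cases hqa : coeff ab.1 q = 0
    · simp [hqa]
    · rw [coeff_truncTotalDegree,
        if_neg (mt (key _ _ (Finset.HasAntidiagonal.mem_antidiagonal.1 hab) hqa).2 h), mul_zero]

variable {ι : Type*} [Fintype ι] {n : ℕ} {A : Matrix ι ι (MvPolynomial σ R)}

theorem map_truncTotalDegree_mul_of_isHomogeneous_left (hA : ∀ i j, (A i j).IsHomogeneous n)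
    (m : ℤ) (M : Matrix ι ι (MvPolynomial σ R)) :
    (A * M).map (truncTotalDegree (m + n)) = A * M.map (truncTotalDegree m) := by
  ext i j
  simp [mul_apply, (hA _ _).truncTotalDegree_mul]

theorem map_truncTotalDegree_mul_of_isHomogeneous_right (hA : ∀ i j, (A i j).IsHomogeneous n)
    (m : ℤ) (M : Matrix ι ι (MvPolynomial σ R)) :
    (M * A).map (truncTotalDegree (m + n)) = M.map (truncTotalDegree m) * A := by
  ext i j
  simp [mul_apply, mul_comm _ (A _ _), (hA _ _).truncTotalDegree_mul]

end TruncTotalDegree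

theorem isHomogeneous_crossMatrix_X {R : Type*} [CommRing R] (i j : Fin 3) :
    (crossMatrix (X : Fin 3 → MvPolynomial (Fin 3) R) i j).IsHomogeneous 1 := by
  have hX := isHomogeneous_X R (σ := Fin 3)
  have hnegX (k : Fin 3) : (-X k : MvPolynomial (Fin 3) R).IsHomogeneous 1 :=
    (homogeneousSubmodule (Fin 3) R 1).neg_mem (hX k)
  fin_cases i <;> fin_cases j <;> simp [crossMatrix, hX, hnegX, isHomogeneous_zero]

theorem eq_crossMatrix_mul_map_truncTotalDegree_mul_crossMatrix {R : Type*} [CommRing R]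
    {P σ : Matrix (Fin 3) (Fin 3) (MvPolynomial (Fin 3) R)} {m : ℤ}
    (hP : ∀ i j, ∀ d ∈ (P i j).support, (d.degree : ℤ) ≤ m + 2)
    (hPσ : P = crossMatrix X * σ * crossMatrix X) :
    P = crossMatrix X * σ.map (truncTotalDegree m) * crossMatrix X :=
  calc P = P.map (truncTotalDegree (m + (1 : ℕ) + (1 : ℕ))) :=
        Matrix.ext fun i j => (truncTotalDegree_eq_self fun d hd => by
          simpa [add_assoc, one_add_one_eq_two] using hP i j d hd).symm
    _ = crossMatrix X * σ.map (truncTotalDegree m) * crossMatrix X := by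
        rw [hPσ, map_truncTotalDegree_mul_of_isHomogeneous_right isHomogeneous_crossMatrix_X,
          map_truncTotalDegree_mul_of_isHomogeneous_left isHomogeneous_crossMatrix_X]

section Evaluation

variable {σ R ι : Type*} [CommRing R] [IsDomain R] [Infinite R]

theorem isSymm_of_forall_isSymm_map_eval {P : Matrix ι ι (MvPolynomial σ R)}
    (h : ∀ x : σ → R, (P.map (eval x)).IsSymm) : P.IsSymm :=
  Matrix.ext fun i j => MvPolynomial.funext fun x => congrFun (congrFun (h x) i) j

theorem mulVec_X_eq_zero_of_forall_map_eval [Fintype σ] {P : Matrix ι σ (MvPolynomial σ R)}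
    (h : ∀ x : σ → R, P.map (eval x) *ᵥ x = 0) : P *ᵥ X = 0 :=
  _root_.funext fun i => MvPolynomial.funext fun x => by
    simpa [RingHom.map_mulVec, Function.comp_def] using congrFun (h x) i

end Evaluation

end MvPolynomial

open MvPolynomial

theorem polyMat_iff {m : ℤ} {A : V3 → M3} :
    PolyMat m A ↔ ∃ P : Matrix (Fin 3) (Fin 3) (MvPolynomial (Fin 3) ℝ),
      (∀ i j, ∀ d ∈ (P i j).support, (d.degree : ℤ) ≤ m) ∧ ∀ x, A x = P.map (eval x) := by
  simp only [PolyMat, PolyDeg, ← Finsupp.degree_eq_sum]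
  constructor
  · intro h
    choose P hdeg hP using h
    exact ⟨Matrix.of P, hdeg, fun x => ext fun i j => congrFun (hP i j) x⟩
  · rintro ⟨P, hdeg, hP⟩ i j
    exact ⟨P i j, hdeg i j, funext fun x => by rw [hP]; rfl⟩

theorem bCrossA_eq_crossMatrix_mul (b : V3) (A : M3) : bCrossA b A = crossMatrix b * A := by
  ext i j
  fin_cases i <;> simp [bCrossA, crossMatrix, eps, mul_apply, Fin.sum_univ_three] <;> ring

theorem aCrossB_eq_mul_crossMatrix (A : M3) (b : V3) : aCrossB A b = A * crossMatrix b := by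
  ext i j
  fin_cases j <;> simp [aCrossB, crossMatrix, eps, mul_apply, Fin.sum_univ_three] <;> ring

/-- if `τ ∈ P_k(ℝ³;𝕊)` and `τ(x)·x = 0` for all `x`, then
`τ(x) = x×(σ(x)×x)` for some `σ ∈ P_{k-2}(ℝ³;𝕊)`. -/
theorem stmt_7 (k : ℕ) (τ : V3 → M3) (hτ : PolySym k τ)
    (h : ∀ x : V3, (τ x).mulVec x = 0) :
    ∃ σ : V3 → M3, PolySym ((k : ℤ) - 2) σ ∧
      ∀ x : V3, τ x = bCrossA x (aCrossB (σ x) x) := by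
  let : Invertible (2 : MvPolynomial (Fin 3) ℝ) :=
    (Invertible.map C (2 : ℝ)).copy 2 (map_ofNat C 2).symm
  obtain ⟨P, hPdeg, hτP⟩ := polyMat_iff.1 hτ.1
  have hPsym : P.IsSymm := isSymm_of_forall_isSymm_map_eval fun x => (hτP x) ▸ hτ.2 x
  have hPX : P *ᵥ X = 0 := mulVec_X_eq_zero_of_forall_map_eval fun x => (hτP x) ▸ h x
  obtain ⟨σ, hσ, hPσ⟩ := exists_isSymm_eq_crossMatrix_mul_mul_crossMatrix
    (fun _ => exists_eq_cross_X_of_dotProduct_X_eq_zero)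
    (fun _ => exists_eq_smul_X_of_cross_X_eq_zero) hPsym hPX
  have hP := eq_crossMatrix_mul_map_truncTotalDegree_mul_crossMatrix (m := k - 2)
    (by simpa using hPdeg) hPσ
  set σ' := σ.map (truncTotalDegree ((k : ℤ) - 2))
  refine ⟨fun x => σ'.map (eval x), ⟨polyMat_iff.2 ⟨σ', fun i j d hd =>
    degree_le_of_mem_support_truncTotalDegree hd, fun x => rfl⟩, fun x => ((hσ.map _).map _).eq⟩,
    fun x => ?_⟩
  rw [hτP, hP, bCrossA_eq_crossMatrix_mul, aCrossB_eq_mul_crossMatrix, Matrix.map_mul,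
    Matrix.map_mul, crossMatrix_map]
  simp [Function.comp_def, Matrix.mul_assoc]
end
end

section
/- For every integer k ≥ 0, the linear subspace { x ↦ τ(x)·x : τ ∈ P_k(ℝ³;𝕊) } of P_{k+1}(ℝ³;ℝ³) has dimension (1/2)(k+4)(k+3)(k+2) − 6. -/
open Matrix

noncomputable section

/-!
Pass to polynomial vector fields `σ → K[X_σ]`, on which evaluation is injective, and write `X`
for the position field. For symmetric `T` one has `2 • T X = ∑ᵢⱼ Tᵢⱼ • (Eᵢⱼ + Eⱼᵢ) X`, so the
space is spanned by the fields `xᵈ (Eᵢⱼ + Eⱼᵢ) x` with `|d| ≤ k`. For `|d| ≥ 1` these are sums of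
vector monomials `x^e eᵢ` with `2 ≤ |e| ≤ k + 1`, and conversely every such vector monomial lies in
the space because of the identity
`2 xⱼ xₗ eᵢ = xₗ (Eᵢⱼ + Eⱼᵢ) x − xᵢ (Eⱼₗ + Eₗⱼ) x + xⱼ (Eₗᵢ + Eᵢₗ) x`.
Hence a basis consists of these vector monomials together with the six fields `(Eᵢⱼ + Eⱼᵢ) x`,
and the dimension is `3 (C(k + 4, 3) − 4) + 6`.
-/

theorem LinearIndependent.of_pairwise_dual_eq_zero_ne_zero {ι K M : Type*} [Field K]
    [AddCommGroup M] [Module K M] (v : ι → M) (f : ι → Module.Dual K M)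
    (h1 : Pairwise fun i j => f i (v j) = 0) (h2 : ∀ i, f i (v i) ≠ 0) :
    LinearIndependent K v :=
  .of_pairwise_dual_eq_zero_one v (fun i => (f i (v i))⁻¹ • f i)
    (fun i j hij => by simp [h1 hij]) (fun i => inv_mul_cancel₀ (h2 i))

namespace SymMulVec

open MvPolynomial Finset

section Exponents

variable {σ : Type*}

lemma exists_eq_add_single {d : σ →₀ ℕ} (hd : d ≠ 0) :
    ∃ m j, d = m + Finsupp.single j 1 := by
  obtain ⟨j, hj⟩ := Finsupp.support_nonempty_iff.2 hd
  exact ⟨d - Finsupp.single j 1, j,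
    (tsub_add_cancel_of_le (Finsupp.single_le_iff.2 (Nat.one_le_iff_ne_zero.2
      (Finsupp.mem_support_iff.1 hj)))).symm⟩

lemma exists_eq_add_single_add_single {d : σ →₀ ℕ} (hd : 2 ≤ d.degree) :
    ∃ m j l, d = m + Finsupp.single j 1 + Finsupp.single l 1 := by
  obtain ⟨m', l, rfl⟩ := exists_eq_add_single (d := d) (by rintro rfl; simp at hd)
  obtain ⟨m, j, rfl⟩ := exists_eq_add_single (d := m') (by
    rintro rfl; simp [Finsupp.degree_single] at hd)
  exact ⟨m, j, l, rfl⟩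

variable [Fintype σ] [DecidableEq σ]

variable (σ) in
def expsOfDegreeIn (s : Finset ℕ) : Finset (σ →₀ ℕ) :=
  s.biUnion fun n => univ.finsuppAntidiag n

lemma mem_expsOfDegreeIn {s : Finset ℕ} {d : σ →₀ ℕ} :
    d ∈ expsOfDegreeIn σ s ↔ d.degree ∈ s := by
  simp [expsOfDegreeIn, mem_finsuppAntidiag, Finsupp.degree_eq_sum]

lemma card_expsOfDegreeIn (s : Finset ℕ) :
    #(expsOfDegreeIn σ s) = ∑ n ∈ s, (Fintype.card σ + n - 1).choose n := by
  rw [expsOfDegreeIn, card_biUnion]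
  · simp [card_finsuppAntidiag_nat_eq_choose]
  · intro m _ n _ hmn
    simp only [Function.onFun, disjoint_left, mem_finsuppAntidiag]
    rintro d ⟨rfl, -⟩ ⟨h, -⟩
    exact hmn h

lemma single_one_ne_of_mem {m : ℕ} {d : σ →₀ ℕ} (hd : d ∈ expsOfDegreeIn σ (Ico 2 m))
    (a : σ) : Finsupp.single a 1 ≠ d := by
  rintro rfl
  simp [mem_expsOfDegreeIn] at hd

end Exponents

section CommRing

variable {σ K : Type*} [CommRing K]

lemma monomial_mem_restrictTotalDegree {k : ℕ} {d : σ →₀ ℕ} (hd : d.degree ≤ k) (c : K) :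
    monomial d c ∈ restrictTotalDegree σ K k := by
  rw [mem_restrictTotalDegree]
  exact (totalDegree_monomial_le d c).trans hd

variable [DecidableEq σ]

/-- The field `(Eᵢⱼ + Eⱼᵢ) X`. -/
def symGen (i j : σ) : σ → MvPolynomial σ K := Pi.single i (X j) + Pi.single j (X i)

lemma symGen_comm (i j : σ) : (symGen i j : σ → MvPolynomial σ K) = symGen j i := add_comm _ _

lemma two_smul_single_X_mul_X (i j l : σ) :
    (2 : K) • (Pi.single i (X j * X l) : σ → MvPolynomial σ K) =
      (X l : MvPolynomial σ K) • symGen i j - (X i : MvPolynomial σ K) • symGen j l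
        + (X j : MvPolynomial σ K) • symGen l i := by
  ext a : 1
  simp only [symGen, Pi.smul_apply, Pi.add_apply, Pi.sub_apply, Pi.single_apply, smul_eq_mul,
    two_smul]
  split_ifs <;> subst_vars <;> ring

variable [Fintype σ]

variable (σ K) in
def symMulVecSet (k : ℕ) : Set (σ → MvPolynomial σ K) :=
  {v | ∃ T : Matrix σ σ (MvPolynomial σ K),
    T.IsSymm ∧ (∀ i j, T i j ∈ restrictTotalDegree σ K k) ∧ v = T *ᵥ X}

lemma two_smul_mulVec_X {T : Matrix σ σ (MvPolynomial σ K)} (hT : T.IsSymm) :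
    (2 : K) • (T *ᵥ X) = ∑ i, ∑ j, T i j • symGen i j := by
  ext a : 1
  simp only [Matrix.mulVec, dotProduct, symGen, Pi.smul_apply, Finset.sum_apply, smul_add,
    Pi.add_apply, Pi.single_apply, smul_eq_mul, mul_ite, mul_zero, Finset.sum_add_distrib,
    Finset.sum_ite_eq, Finset.mem_univ, if_true]
  rw [Finset.sum_comm]
  simp only [Finset.sum_ite_eq, Finset.mem_univ, if_true, hT.apply, two_smul]

lemma smul_symGen_mem {k : ℕ} {q : MvPolynomial σ K} (hq : q ∈ restrictTotalDegree σ K k)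
    (i j : σ) : q • symGen i j ∈ symMulVecSet σ K k := by
  refine ⟨Matrix.single i j q + Matrix.single j i q, ?_, fun a b => ?_, ?_⟩
  · simp [Matrix.IsSymm, Matrix.transpose_add, Matrix.transpose_single, add_comm]
  · simp only [Matrix.add_apply, Matrix.single_apply]
    refine add_mem ?_ ?_ <;> split_ifs <;> simp [hq]
  · rw [Matrix.add_mulVec, Matrix.single_mulVec, Matrix.single_mulVec]
    simp only [symGen, smul_add, ← Pi.single_smul', smul_eq_mul]
    rfl

variable (σ) in
abbrev BasisIdx (k : ℕ) : Type _ :=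
  (expsOfDegreeIn σ (Ico 2 (k + 2)) × σ) ⊕ Sym2 σ

variable (σ K) in
def basisVec (k : ℕ) : BasisIdx σ k → σ → MvPolynomial σ K :=
  Sum.elim (fun t => Pi.single t.2 (monomial t.1.1 1)) (Sym2.lift ⟨symGen, symGen_comm⟩)

variable (σ K) in
def coeffDual (k : ℕ) : BasisIdx σ k → Module.Dual K (σ → MvPolynomial σ K) :=
  Sum.elim (fun t => lcoeff K t.1.1 ∘ₗ LinearMap.proj t.2)
    (Sym2.lift ⟨fun i j => lcoeff K (Finsupp.single j 1) ∘ₗ LinearMap.proj i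
      + lcoeff K (Finsupp.single i 1) ∘ₗ LinearMap.proj j, fun _ _ => add_comm _ _⟩)

lemma coeffDual_basisVec_of_ne {k : ℕ} {s t : BasisIdx σ k} (hst : s ≠ t) :
    coeffDual σ K k s (basisVec σ K k t) = 0 := by
  rcases s with ⟨⟨d, hd⟩, i⟩ | e <;> rcases t with ⟨⟨d', hd'⟩, i'⟩ | e'
  · simp only [coeffDual, basisVec, Sum.elim_inl, LinearMap.coe_comp, Function.comp_apply,
      LinearMap.coe_proj, Function.eval, lcoeff_apply, Pi.single_apply, apply_ite (coeff d),
      coeff_monomial, coeff_zero]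
    split_ifs with h1 h2 <;> first | rfl | (subst h1 h2; exact absurd rfl hst)
  · induction e' using Sym2.ind
    simp [coeffDual, basisVec, Pi.single_apply, symGen, apply_ite (coeff d), coeff_X,
      single_one_ne_of_mem hd]
  · induction e using Sym2.ind
    simp [coeffDual, basisVec, Pi.single_apply, apply_ite (coeff _), coeff_monomial,
      fun a => (single_one_ne_of_mem hd' a).symm]
  · induction e using Sym2.ind
    induction e' using Sym2.ind
    simp only [ne_eq, Sum.inr.injEq, Sym2.eq_iff] at hst
    simp [coeffDual, basisVec, Pi.single_apply, symGen, apply_ite (coeff _), coeff_X,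
      Finsupp.single_left_inj one_ne_zero]
    split_ifs <;> subst_vars <;> simp at hst ⊢

lemma coeffDual_basisVec_self_ne_zero [CharZero K] {k : ℕ} (t : BasisIdx σ k) :
    coeffDual σ K k t (basisVec σ K k t) ≠ 0 := by
  rcases t with ⟨⟨d, hd⟩, i⟩ | e
  · simp [coeffDual, basisVec]
  · induction e using Sym2.ind
    simp [coeffDual, basisVec, Pi.single_apply, symGen, apply_ite (coeff _), coeff_X]
    split_ifs <;> norm_num

end CommRing

section Field

variable {σ K : Type*} [Fintype σ] [DecidableEq σ] [Field K] {k : ℕ}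

lemma monomial_smul_symGen_mem_span {d : σ →₀ ℕ} (hd : d.degree ≤ k) (i j : σ) :
    monomial d (1 : K) • symGen i j ∈ Submodule.span K (Set.range (basisVec σ K k)) := by
  rcases eq_or_ne d 0 with rfl | hd0
  · rw [← C_apply, C_1, one_smul]
    exact Submodule.subset_span ⟨.inr s(i, j), rfl⟩
  · have hpos : d.degree ≠ 0 := (Finsupp.degree_eq_zero_iff d).not.2 hd0
    have hexp : ∀ a, d + Finsupp.single a 1 ∈ expsOfDegreeIn σ (Ico 2 (k + 2)) := fun a =>
      mem_expsOfDegreeIn.2 (by simp only [map_add, Finsupp.degree_single, mem_Ico]; omega)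
    have hv : monomial d (1 : K) • symGen i j = basisVec σ K k (.inl (⟨_, hexp j⟩, i))
        + basisVec σ K k (.inl (⟨_, hexp i⟩, j)) := by
      simp [symGen, basisVec, smul_add, ← Pi.single_smul', monomial_add_single]
    rw [hv]
    exact add_mem (Submodule.subset_span ⟨_, rfl⟩) (Submodule.subset_span ⟨_, rfl⟩)

lemma smul_symGen_mem_span {q : MvPolynomial σ K} (hq : q ∈ restrictTotalDegree σ K k)
    (i j : σ) : q • symGen i j ∈ Submodule.span K (Set.range (basisVec σ K k)) := by
  rw [as_sum q, Finset.sum_smul]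
  refine Submodule.sum_mem _ fun d hd => ?_
  rw [← mul_one (coeff d q), ← smul_eq_mul, ← smul_monomial, smul_assoc]
  exact Submodule.smul_mem _ _ (monomial_smul_symGen_mem_span
    ((le_totalDegree hd).trans ((mem_restrictTotalDegree _ _ _).1 hq)) i j)

variable [CharZero K]

lemma basisVec_mem_span (t : BasisIdx σ k) :
    basisVec σ K k t ∈ Submodule.span K (symMulVecSet σ K k) := by
  rcases t with ⟨⟨d, hd'⟩, i⟩ | e
  · have hd := mem_Ico.1 (mem_expsOfDegreeIn.1 hd')
    obtain ⟨m, j, l, rfl⟩ := exists_eq_add_single_add_single hd.1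
    have hm : ∀ a, monomial m 1 * X a ∈ restrictTotalDegree σ K k := fun a => by
      rw [← pow_one (X a), ← monomial_add_single]
      exact monomial_mem_restrictTotalDegree (by simp [map_add] at hd ⊢; omega) _
    have hv : basisVec σ K k (.inl (⟨_, hd'⟩, i)) =
        monomial m (1 : K) • Pi.single i (X j * X l) := by
      ext a : 1
      simp [basisVec, Pi.single_apply, monomial_add_single, mul_assoc]
    rw [← Submodule.smul_mem_iff _ (two_ne_zero (α := K)), hv, smul_comm,
      two_smul_single_X_mul_X, smul_add, smul_sub, smul_smul, smul_smul, smul_smul]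
    exact add_mem (sub_mem (Submodule.subset_span (smul_symGen_mem (hm l) i j))
      (Submodule.subset_span (smul_symGen_mem (hm i) j l)))
      (Submodule.subset_span (smul_symGen_mem (hm j) l i))
  · induction e using Sym2.ind with
    | h i j =>
      rw [← one_smul (MvPolynomial σ K) (basisVec σ K k _)]
      exact Submodule.subset_span
        (smul_symGen_mem ((mem_restrictTotalDegree _ _ _).2 (by simp)) i j)

variable (σ K k) in
lemma span_symMulVecSet :
    Submodule.span K (symMulVecSet σ K k) = Submodule.span K (Set.range (basisVec σ K k)) := by
  refine le_antisymm (Submodule.span_le.2 ?_)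
    (Submodule.span_le.2 (Set.range_subset_iff.2 fun t => basisVec_mem_span t))
  rintro _ ⟨T, hT, hdeg, rfl⟩
  rw [SetLike.mem_coe, ← Submodule.smul_mem_iff _ (two_ne_zero (α := K)), two_smul_mulVec_X hT]
  exact Submodule.sum_mem _ fun i _ => Submodule.sum_mem _ fun j _ =>
    smul_symGen_mem_span (hdeg i j) i j

lemma linearIndependent_basisVec : LinearIndependent K (basisVec σ K k) :=
  .of_pairwise_dual_eq_zero_ne_zero _ (coeffDual σ K k) (fun _ _ => coeffDual_basisVec_of_ne)
    coeffDual_basisVec_self_ne_zero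

end Field

lemma card_basisIdx_fin_three (k : ℕ) :
    Fintype.card (BasisIdx (Fin 3) k) = (k + 4) * (k + 3) * (k + 2) / 2 - 6 := by
  have hsum : ∑ n ∈ Ico 2 (k + 2), (3 + n - 1).choose n + 4 = (k + 4).choose 3 := by
    have h : ∑ n ∈ range (k + 2), (n + 2).choose 2 = (k + 4).choose 3 :=
      Nat.sum_range_add_choose (k + 1) 2
    rw [← Finset.sum_range_add_sum_Ico _ (by omega : 2 ≤ k + 2)] at h
    have hlow : ∑ n ∈ range 2, (n + 2).choose 2 = 4 := rfl
    have hsymm : ∀ n, (3 + n - 1).choose n = (n + 2).choose 2 := fun n => by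
      rw [show 3 + n - 1 = n + 2 by omega, Nat.choose_symm_add]
    simp only [hsymm]
    omega
  have hchoose : 6 * (k + 4).choose 3 = (k + 4) * (k + 3) * (k + 2) := by
    rw [show 6 = Nat.factorial 3 from rfl, ← Nat.descFactorial_eq_factorial_mul_choose]
    simp [Nat.descFactorial]
    ring
  simp only [Fintype.card_sum, Fintype.card_prod, Fintype.card_coe, card_expsOfDegreeIn,
    Fintype.card_fin, Sym2.card, show (3 + 1).choose 2 = 6 from rfl]
  omega

section Evaluation

variable {σ R : Type*} [CommRing R]

def evalVec : (σ → MvPolynomial σ R) →ₗ[R] (σ → R) → σ → R where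
  toFun p x i := eval x (p i)
  map_add' p q := by ext; simp
  map_smul' c p := by ext; simp [smul_eq_C_mul]

lemma ker_evalVec [IsDomain R] [Infinite R] : LinearMap.ker (evalVec (σ := σ) (R := R)) = ⊥ :=
  LinearMap.ker_eq_bot.2 fun _ _ h => funext fun i =>
    MvPolynomial.funext fun x => congrFun (congrFun h x) i

lemma evalVec_mulVec_X [Fintype σ] (T : Matrix σ σ (MvPolynomial σ R)) :
    evalVec (T *ᵥ X) = fun x => T.map (eval x) *ᵥ x := by
  ext x i
  simp [evalVec, RingHom.map_mulVec, Function.comp_def]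

end Evaluation

lemma polyDeg_iff {m : ℕ} {f : V3 → ℝ} :
    PolyDeg m f ↔ ∃ p ∈ restrictTotalDegree (Fin 3) ℝ m, f = fun x => eval x p := by
  simp only [PolyDeg, restrictTotalDegree, mem_restrictSupport_iff, Set.subset_def,
    Finset.mem_coe, Set.mem_ofPred_eq, Nat.cast_le, Finsupp.sum_fintype, implies_true]

lemma image_evalVec_symMulVecSet (k : ℕ) :
    evalVec '' symMulVecSet (Fin 3) ℝ k =
      {f : V3 → V3 | ∃ τ : V3 → M3, PolySym k τ ∧ f = fun x => (τ x).mulVec x} := by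
  ext f
  constructor
  · rintro ⟨_, ⟨T, hT, hdeg, rfl⟩, rfl⟩
    refine ⟨fun x => T.map (eval x), ⟨fun i j => polyDeg_iff.2 ⟨T i j, hdeg i j, rfl⟩,
      fun x => by dsimp only; rw [← Matrix.transpose_map, hT.eq]⟩, evalVec_mulVec_X T⟩
  · rintro ⟨τ, ⟨hmat, hsymm⟩, rfl⟩
    choose p hdeg hp using fun i j => polyDeg_iff.1 (hmat i j)
    have hT : (Matrix.of p).IsSymm := Matrix.IsSymm.ext fun i j => MvPolynomial.funext fun x => by
      rw [Matrix.of_apply, Matrix.of_apply, ← congrFun (hp i j) x, ← congrFun (hp j i) x,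
        ← Matrix.transpose_apply (τ x), hsymm]
    refine ⟨_, ⟨Matrix.of p, hT, hdeg, rfl⟩, ?_⟩
    rw [evalVec_mulVec_X]
    ext x : 1
    congr 1
    ext i j
    exact (congrFun (hp i j) x).symm

end SymMulVec

/-- the subspace `{x ↦ τ(x)·x : τ ∈ P_k(ℝ³;𝕊)}` of `P_{k+1}(ℝ³;ℝ³)`
has dimension `(k+4)(k+3)(k+2)/2 − 6`. -/
theorem stmt_8 (k : ℕ) :
    Module.finrank ℝ
      (Submodule.span ℝ
        {f : V3 → V3 | ∃ τ : V3 → M3, PolySym k τ ∧ f = fun x => (τ x).mulVec x})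
      = (k + 4) * (k + 3) * (k + 2) / 2 - 6 := by
  open SymMulVec in
  rw [← image_evalVec_symMulVecSet, ← Submodule.map_span, span_symMulVecSet, Submodule.map_span,
    ← Set.range_comp, finrank_span_eq_card (linearIndependent_basisVec.map' _ ker_evalVec),
    card_basisIdx_fin_three]
end
end

section
/- Let n ∈ ℝ³ be a unit vector. For every twice continuously differentiable vector field v : ℝ³ → ℝ³, one has pointwise on ℝ³: n×(def v)×n = sym( curl_F( v×n ) ). -/
open Matrix

noncomputable section

/-- The tangential projection matrix `Π_F = I - n nᵀ`. -/
def PF (n : V3) : M3 := 1 - Matrix.vecMulVec n n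

/-- Tangential derivative `(∇_F)_i f = Σ_k (Π_F)_{ik} ∂_k f`. -/
def dF (n : V3) (i : Fin 3) (f : V3 → ℝ) : V3 → ℝ :=
  fun x => ∑ k, PF n i k * pd k f x

/-- `(∇_F^⊥)_i f = Σ_{k,l} ε_{ikl} n_k ∂_l f`. -/
def dFperp (n : V3) (i : Fin 3) (f : V3 → ℝ) : V3 → ℝ :=
  fun x => ∑ k, ∑ l, eps i k l * n k * pd l f x

/-- `(∇_F w)_{ij} = (∇_F)_i w_j`. -/
def gradF (n : V3) (w : V3 → V3) : V3 → M3 :=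
  fun x => Matrix.of fun i j => dF n i (fun y => w y j) x

/-- First trace for the `inc` operator: `tr₁(τ) = n×τ×n`. -/
def tr1 (n : V3) (τ : V3 → M3) : V3 → M3 :=
  fun x => bCrossA n (aCrossB (τ x) n)

/-- Second trace for the `inc` operator:
`tr₂(τ) = sym( n×(∇×τ)·Π_F + ∇_F(n·τ·Π_F) )`. -/
def tr2 (n : V3) (τ : V3 → M3) : V3 → M3 :=
  fun x => symMat (bCrossA n (colCurl τ x) * PF n
    + gradF n (fun y => Matrix.vecMul (Matrix.vecMul n (τ y)) (PF n)) x)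

/-- `(curl_F w)_{ij} = (∇_F^⊥)_j w_i`. -/
def curlF (n : V3) (w : V3 → V3) : V3 → M3 :=
  fun x => Matrix.of fun i j => dFperp n j (fun y => w y i) x

/-!
Since `n` is constant, `∂ₗ(v×n) = (∂ₗv)×n`, so both sides are linear in the entries of `∇v`
at the point; the identity then reduces to a polynomial identity in those entries and the
components of `n`, checked entrywise.
-/

lemma pd_sum_const_mul {ι : Type*} [Fintype ι] (c : ι → ℝ) (f : ι → V3 → ℝ) (x : V3)
    (hf : ∀ p, DifferentiableAt ℝ (f p) x) (l : Fin 3) :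
    pd l (fun y => ∑ p, c p * f p y) x = ∑ p, c p * pd l (f p) x := by
  unfold pd
  rw [fderiv_fun_sum fun p _ => (hf p).const_mul (c p), _root_.sum_apply]
  exact Finset.sum_congr rfl fun p _ => by rw [fderiv_const_mul (hf p) (c p)]; rfl

lemma vcross_apply_eq_sum (a b : V3) (i : Fin 3) :
    vcross a b i = ∑ p, (∑ q, eps i p q * b q) * a p := by
  simp only [vcross, Finset.sum_mul]
  exact Finset.sum_congr rfl fun p _ => Finset.sum_congr rfl fun q _ => by ring

lemma pd_vcross_const (w : V3 → V3) (b x : V3) (hw : DifferentiableAt ℝ w x) (l i : Fin 3) :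
    pd l (fun y => vcross (w y) b i) x = vcross (fun p => pd l (fun y => w y p) x) b i := by
  simp only [vcross_apply_eq_sum]
  exact pd_sum_const_mul _ _ x (fun p => differentiableAt_pi.mp hw p) l

lemma bCrossA_aCrossB_symMat (n : V3) (G : M3) :
    bCrossA n (aCrossB (symMat G) n)
      = symMat (Matrix.of fun i j => ∑ k, ∑ l, eps j k l * n k * vcross (G l) n i) := by
  ext i j
  simp only [bCrossA, aCrossB, symMat, vcross, Matrix.of_apply, Matrix.smul_apply,
    Matrix.add_apply, Matrix.transpose_apply, smul_eq_mul]
  fin_cases i <;> fin_cases j <;> simp only [Fin.sum_univ_three, Fin.isValue] <;>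
    norm_num [eps] <;> ring

lemma curlF_vcross_const (n : V3) (v : V3 → V3) (x : V3) (hv : DifferentiableAt ℝ v x) :
    curlF n (fun y => vcross (v y) n) x
      = Matrix.of fun i j => ∑ k, ∑ l, eps j k l * n k * vcross (gradv v x l) n i := by
  ext i j
  simp only [curlF, dFperp, gradv, Matrix.of_apply, pd_vcross_const v n x hv]
  rfl

theorem stmt_13_general (n : V3)
    (v : V3 → V3) (hv : ContDiff ℝ 2 v) :
    ∀ x, bCrossA n (aCrossB (defv v x) n)
      = symMat (curlF n (fun y => vcross (v y) n) x) := fun x => by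
  rw [curlF_vcross_const n v x (hv.differentiable two_ne_zero x), defv,
    bCrossA_aCrossB_symMat]

/-- `n×(def v)×n = sym(curl_F(v×n))`. -/
theorem stmt_13 (n : V3) (hn : ∑ i, n i * n i = 1)
    (v : V3 → V3) (hv : ContDiff ℝ 2 v) :
    ∀ x, bCrossA n (aCrossB (defv v x) n)
      = symMat (curlF n (fun y => vcross (v y) n) x) :=
  stmt_13_general n v hv
end
end

section
/- Let n ∈ ℝ³ be a unit vector. For every twice continuously differentiable vector field v : ℝ³ → ℝ³, one has pointwise on ℝ³: tr₂(def v) = ∇_F²(v·n), where v·n is the scalar field Σ_i v_i n_i. -/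
open Matrix

noncomputable section

/-- The tangential Hessian `(∇_F² f)_{ij} = (∇_F)_i (∇_F)_j f`. -/
def hessF (n : V3) (f : V3 → ℝ) : V3 → M3 :=
  fun x => Matrix.of fun i j => dF n i (dF n j f) x

/-!
At a point `x` write `τ = def v`, `w = v·n`, `H = ∇²w` and `M = ∇(∂ₙv)`. The vector triple
product gives `n×(∇×τ) = ∇(n·τ) − ∂ₙτ`, and `n·τ = (∂ₙv + ∇w)/2`; with the symmetry of second
derivatives this yields `n×(∇×τ) = (H − Mᵀ)/2` and `∇(n·τ) = (M + H)/2`. Hence, with `Π = 1 − P`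
and `P = n nᵀ`,
`2 tr₂(τ) = sym((H − Mᵀ)Π + Π(M + H)Π) = 2ΠHΠ + (P(H − Mᵀ)Π + Π(H − M)P)/2`,
and the correction vanishes because `nᵀH = (Mn)ᵀ`: both are `∇(∂ₙw)`. Finally `∇_F²w = ΠHΠ`.
-/

section PartialDerivatives

variable {f g : V3 → ℝ} {x : V3}

lemma pd_add (k : Fin 3) (hf : DifferentiableAt ℝ f x) (hg : DifferentiableAt ℝ g x) :
    pd k (fun y => f y + g y) x = pd k f x + pd k g x := by
  simp only [pd, fderiv_fun_add hf hg, _root_.add_apply]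

lemma pd_const_mul (k : Fin 3) (c : ℝ) (hf : DifferentiableAt ℝ f x) :
    pd k (fun y => c * f y) x = c * pd k f x := by
  simp only [pd, fderiv_const_mul hf, _root_.smul_apply, smul_eq_mul]

lemma pd_sum_mul {ι : Type*} [Fintype ι] (k : Fin 3) (c : ι → ℝ) {F : ι → V3 → ℝ}
    (hF : ∀ i, DifferentiableAt ℝ (F i) x) :
    pd k (fun y => ∑ i, c i * F i y) x = ∑ i, c i * pd k (F i) x := by
  simp only [pd, fderiv_fun_sum fun i _ => (hF i).const_mul (c i), _root_.sum_apply,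
    fderiv_const_mul (hF _), _root_.smul_apply, smul_eq_mul]

lemma ContDiff.differentiable_pd (hf : ContDiff ℝ 2 f) (k : Fin 3) :
    Differentiable ℝ (pd k f) :=
  ((hf.fderiv_right (m := 1) (by norm_num)).clm_apply contDiff_const).differentiable
    (by norm_num)

lemma pd_pd_comm (hf : ContDiffAt ℝ 2 f x) (a b : Fin 3) :
    pd a (pd b f) x = pd b (pd a f) x := by
  have hdf : DifferentiableAt ℝ (fderiv ℝ f) x :=
    (hf.fderiv_right (m := 1) (by norm_num)).differentiableAt (by norm_num)
  have second : ∀ c d : Fin 3,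
      pd c (pd d f) x = fderiv ℝ (fderiv ℝ f) x (Pi.single c 1) (Pi.single d 1) := by
    intro c d
    change fderiv ℝ (fun y => fderiv ℝ f y (Pi.single d 1)) x (Pi.single c 1) = _
    rw [fderiv_clm_apply hdf (differentiableAt_const _)]
    simp
  rw [second, second]
  exact hf.isSymmSndFDerivAt (by simp) _ _

def hess (f : V3 → ℝ) (x : V3) : M3 := Matrix.of fun k l => pd k (pd l f) x

lemma hess_transpose (hf : ContDiffAt ℝ 2 f x) : (hess f x)ᵀ = hess f x := by
  ext k l
  exact pd_pd_comm hf l k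

end PartialDerivatives

section TangentialDerivatives

variable {x : V3}

lemma PF_symm (n : V3) (i j : Fin 3) : PF n i j = PF n j i := by
  simp only [PF, Matrix.sub_apply, Matrix.one_apply, Matrix.vecMulVec_apply, eq_comm, mul_comm]

lemma gradF_vecMul (n : V3) {g : V3 → V3} (B : M3) (hg : DifferentiableAt ℝ g x) :
    gradF n (fun y => g y ᵥ* B) x = PF n * gradv g x * B := by
  ext i j
  have hB : ∀ k, pd k (fun y => (g y ᵥ* B) j) x = ∑ a, B a j * pd k (fun y => g y a) x := by
    intro k
    simp only [vecMul, dotProduct, mul_comm _ (B _ j)]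
    exact pd_sum_mul k _ fun a => differentiableAt_pi.mp hg a
  simp only [gradF, dF, gradv, Matrix.of_apply, hB, Matrix.mul_apply, Finset.mul_sum,
    Finset.sum_mul]
  rw [Finset.sum_comm]
  simp only [mul_comm, mul_left_comm]

lemma hessF_eq (n : V3) {f : V3 → ℝ} (hf : ∀ l, DifferentiableAt ℝ (pd l f) x) :
    hessF n f x = PF n * hess f x * PF n := by
  ext i j
  have hdF : ∀ k, pd k (dF n j f) x = ∑ l, PF n j l * pd k (pd l f) x :=
    fun k => pd_sum_mul k _ hf
  simp only [hessF, dF, Matrix.of_apply, hdF, Matrix.mul_apply, hess, Finset.mul_sum,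
    Finset.sum_mul]
  rw [Finset.sum_comm]
  simp only [PF_symm n j, mul_comm, mul_left_comm]

end TangentialDerivatives

lemma sum_eps_mul_sum_eps (n : V3) (D : M3) (i : Fin 3) :
    ∑ k, ∑ l, eps i k l * n k * ∑ s, ∑ t, eps l s t * D s t
      = ∑ t, n t * D i t - ∑ k, n k * D k i := by
  fin_cases i <;> simp [Fin.sum_univ_three, eps] <;> ring

lemma bCrossA_colCurl (n : V3) (τ : V3 → M3) (x : V3) :
    bCrossA n (colCurl τ x) = Matrix.of fun i j =>
      ∑ t, n t * pd i (fun y => τ y t j) x - ∑ k, n k * pd k (fun y => τ y i j) x := by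
  ext i j
  exact sum_eps_mul_sum_eps n (Matrix.of fun s t => pd s (fun y => τ y t j) x) i

lemma Matrix.add_transpose_eq_of_mul_eq {m R : Type*} [Fintype m] [DecidableEq m] [CommRing R]
    {P H M : Matrix m m R} (hP : Pᵀ = P) (hH : Hᵀ = H) (hPH : P * H = P * Mᵀ) :
    (H - Mᵀ) * (1 - P) + (1 - P) * (M + H) * (1 - P)
      + ((H - Mᵀ) * (1 - P) + (1 - P) * (M + H) * (1 - P))ᵀ
      = 4 • ((1 - P) * H * (1 - P)) := by
  have hHP : H * P = M * P := by
    simpa [Matrix.transpose_mul, hH, hP] using congrArg Matrix.transpose hPH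
  simp only [Matrix.transpose_add, Matrix.transpose_mul, Matrix.transpose_sub,
    Matrix.transpose_one, Matrix.transpose_transpose, hP, hH]
  calc _ = 4 • ((1 - P) * H * (1 - P)) + (P * H - P * Mᵀ) * (1 - P)
        + (1 - P) * (H * P - M * P) := by noncomm_ring
    _ = _ := by rw [hPH, hHP]; simp

lemma symMat_half_smul (B : M3) : symMat ((2:ℝ)⁻¹ • B) = (4:ℝ)⁻¹ • (B + Bᵀ) := by
  simp only [symMat, Matrix.transpose_smul, ← smul_add, smul_smul]
  norm_num

lemma symMat_tr2_eq (n : V3) {H M : M3} (hH : Hᵀ = H)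
    (hnH : n ᵥ* H = M *ᵥ n) :
    symMat ((2:ℝ)⁻¹ • (H - Mᵀ) * PF n + PF n * ((2:ℝ)⁻¹ • (M + H)) * PF n)
      = PF n * H * PF n := by
  rw [Matrix.mul_smul, Matrix.smul_mul, Matrix.smul_mul, ← smul_add, symMat_half_smul, PF,
    Matrix.add_transpose_eq_of_mul_eq (Matrix.transpose_vecMulVec n n) hH
      (by rw [vecMulVec_mul, vecMulVec_mul, vecMul_transpose, hnH]),
    ← Nat.cast_smul_eq_nsmul ℝ, smul_smul]
  norm_num

lemma defv_apply (v : V3 → V3) (y : V3) (t c : Fin 3) :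
    defv v y t c = 2⁻¹ * (pd t (fun y => v y c) y + pd c (fun y => v y t) y) := by
  simp [defv, symMat, gradv]

section DeformationField

variable {v : V3 → V3} (hv : ContDiff ℝ 2 v) (n x : V3)
include hv

lemma contDiff_component (m : Fin 3) : ContDiff ℝ 2 fun y => v y m :=
  contDiff_pi.mp hv m

lemma contDiff_normalComponent : ContDiff ℝ 2 fun y => ∑ i, v y i * n i := by
  fun_prop

lemma differentiableAt_pd_component (a m : Fin 3) :
    DifferentiableAt ℝ (pd a fun y => v y m) x :=
  (contDiff_component hv m).differentiable_pd a x

lemma differentiableAt_defv_apply (t c : Fin 3) :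
    DifferentiableAt ℝ (fun y => defv v y t c) x := by
  simp only [defv_apply]
  exact ((differentiableAt_pd_component hv x t c).add
    (differentiableAt_pd_component hv x c t)).const_mul _

lemma differentiableAt_vecMul_defv : DifferentiableAt ℝ (fun y => n ᵥ* defv v y) x :=
  differentiableAt_pi.mpr fun c =>
    show DifferentiableAt ℝ (fun y => ∑ a, n a * defv v y a c) x from
      DifferentiableAt.fun_sum fun a _ => (differentiableAt_defv_apply hv x a c).const_mul (n a)

lemma pd_pd_component_comm (a b m : Fin 3) :
    pd a (pd b fun y => v y m) x = pd b (pd a fun y => v y m) x :=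
  pd_pd_comm (contDiff_component hv m).contDiffAt a b

lemma pd_normalComponent (l : Fin 3) (y : V3) :
    pd l (fun y => ∑ i, v y i * n i) y = ∑ m, n m * pd l (fun y => v y m) y := by
  simp only [mul_comm _ (n _)]
  exact pd_sum_mul l n fun m => (contDiff_component hv m).differentiable (by norm_num) y

lemma hess_normalComponent_apply (k l : Fin 3) :
    hess (fun y => ∑ i, v y i * n i) x k l = ∑ m, n m * pd k (pd l fun y => v y m) x := by
  simp only [hess, Matrix.of_apply, funext (pd_normalComponent hv n l)]
  exact pd_sum_mul k n fun m => differentiableAt_pd_component hv x l m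

lemma gradv_normalDeriv_apply (k c : Fin 3) :
    gradv (fun y => n ᵥ* gradv v y) x k c = ∑ m, n m * pd k (pd m fun y => v y c) x :=
  pd_sum_mul k n fun m => differentiableAt_pd_component hv x m c

lemma pd_defv (s t c : Fin 3) :
    pd s (fun y => defv v y t c) x
      = 2⁻¹ * (pd s (pd t fun y => v y c) x + pd s (pd c fun y => v y t) x) := by
  simp only [defv_apply]
  rw [pd_const_mul (f := fun y => _ + _) _ _ ((differentiableAt_pd_component hv x t c).add
      (differentiableAt_pd_component hv x c t)),
    pd_add _ (differentiableAt_pd_component hv x t c) (differentiableAt_pd_component hv x c t)]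

lemma gradv_vecMul_defv :
    gradv (fun y => n ᵥ* defv v y) x
      = (2:ℝ)⁻¹ • (gradv (fun y => n ᵥ* gradv v y) x + hess (fun y => ∑ i, v y i * n i) x) := by
  ext k c
  have hsum :
      pd k (fun y => (n ᵥ* defv v y) c) x = ∑ a, n a * pd k (fun y => defv v y a c) x :=
    pd_sum_mul k n fun a => differentiableAt_defv_apply hv x a c
  rw [Matrix.smul_apply, Matrix.add_apply, gradv_normalDeriv_apply hv,
    hess_normalComponent_apply hv, smul_eq_mul, Finset.sum_add_distrib.symm, Finset.mul_sum]
  refine hsum.trans (Finset.sum_congr rfl fun a _ => ?_)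
  rw [pd_defv hv]
  ring

lemma bCrossA_colCurl_defv :
    bCrossA n (colCurl (defv v) x)
      = (2:ℝ)⁻¹ •
        (hess (fun y => ∑ i, v y i * n i) x - (gradv (fun y => n ᵥ* gradv v y) x)ᵀ) := by
  ext i c
  have hswap : ∀ k, pd k (fun y => defv v y i c) x
      = 2⁻¹ * (pd i (pd k fun y => v y c) x + pd c (pd k fun y => v y i) x) := by
    intro k
    rw [pd_defv hv, pd_pd_component_comm hv x k i, pd_pd_component_comm hv x k c]
  rw [bCrossA_colCurl, Matrix.of_apply, Matrix.smul_apply, Matrix.sub_apply,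
    Matrix.transpose_apply, gradv_normalDeriv_apply hv, hess_normalComponent_apply hv]
  simp only [hswap, pd_defv hv, mul_add, mul_left_comm (n _) (2⁻¹ : ℝ), Finset.sum_add_distrib,
    ← Finset.mul_sum, smul_eq_mul]
  ring

lemma vecMul_hess_normalComponent :
    n ᵥ* hess (fun y => ∑ i, v y i * n i) x = gradv (fun y => n ᵥ* gradv v y) x *ᵥ n := by
  ext j
  simp only [vecMul, mulVec, dotProduct, hess_normalComponent_apply hv,
    gradv_normalDeriv_apply hv, Finset.mul_sum, Finset.sum_mul]
  rw [Finset.sum_comm]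
  refine Finset.sum_congr rfl fun m _ => Finset.sum_congr rfl fun k _ => ?_
  rw [pd_pd_component_comm hv x k j]
  ring

end DeformationField

theorem stmt_14_general (n : V3)
    (v : V3 → V3) (hv : ContDiff ℝ 2 v) :
    ∀ x, tr2 n (defv v) x = hessF n (fun y => ∑ i, v y i * n i) x := by
  intro x
  rw [tr2, bCrossA_colCurl_defv hv, gradF_vecMul _ _ (differentiableAt_vecMul_defv hv n x),
    gradv_vecMul_defv hv,
    hessF_eq n fun l => (contDiff_normalComponent hv n).differentiable_pd l x]
  exact symMat_tr2_eq n (hess_transpose (contDiff_normalComponent hv n).contDiffAt)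
    (vecMul_hess_normalComponent hv n x)

/-- `tr₂(def v) = ∇_F²(v·n)`. -/
theorem stmt_14 (n : V3) (hn : ∑ i, n i * n i = 1)
    (v : V3 → V3) (hv : ContDiff ℝ 2 v) :
    ∀ x, tr2 n (defv v) x = hessF n (fun y => ∑ i, v y i * n i) x :=
  stmt_14_general n v hv
end
end
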